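/- arXiv:2202.06837 — 4 statements merged into one kernel-verified Lean document; each statement's English description precedes it below -/
import Mathlib

section
/- Let (A,d,⟨·,·⟩) be a cochain complex with pairing. If the degenerate subspace A_deg ⊆ A is an acyclic subcomplex and the nondegenerate quotient Q(A) is of finite type, then A is of Hodge type. -/
noncomputable section

/-- A cochain complex over `ℝ` (with a `ℤ`-grading realized as an internal direct sum
of submodules) together with a graded-symmetric pairing of degree `n` compatible with
the differential. -/
structure PairedComplex (A : Type*) [AddCommGroup A] [Module ℝ A] where
  /-- the grading `A = ⊕ᵢ Aⁱ` -/
  grading : ℤ → Submodule ℝ A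
  internal : DirectSum.IsInternal grading
  /-- the differential -/
  d : A →ₗ[ℝ] A
  d_degree : ∀ i : ℤ, ∀ x ∈ grading i, d x ∈ grading (i + 1)
  d_sq : ∀ x : A, d (d x) = 0
  /-- the degree of the pairing -/
  n : ℤ
  /-- the pairing -/
  pair : A →ₗ[ℝ] A →ₗ[ℝ] ℝ
  pair_degree : ∀ i j : ℤ, i + j ≠ n → ∀ x ∈ grading i, ∀ y ∈ grading j, pair x y = 0
  pair_symm : ∀ i j : ℤ, ∀ x ∈ grading i, ∀ y ∈ grading j,
      pair x y = (-1 : ℝ) ^ (i * j) * pair y x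
  pair_d : ∀ i : ℤ, ∀ x ∈ grading i, ∀ y : A,
      pair (d x) y = (-1 : ℝ) ^ (1 + i) * pair x (d y)

namespace PairedComplex

variable {A : Type*} [AddCommGroup A] [Module ℝ A] (X : PairedComplex A)

/-- `f` is homogeneous of degree `k`. -/
def IsDegree (f : A →ₗ[ℝ] A) (k : ℤ) : Prop :=
  ∀ i : ℤ, ∀ x ∈ X.grading i, f x ∈ X.grading (i + k)

/-- A chain map: a degree `0` map commuting with the differential. -/
def IsChainMap (f : A →ₗ[ℝ] A) : Prop :=
  X.IsDegree f 0 ∧ ∀ x : A, f (X.d x) = X.d (f x)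

/-- A projection: an idempotent chain map. -/
def IsProjection (p : A →ₗ[ℝ] A) : Prop :=
  X.IsChainMap p ∧ ∀ x : A, p (p x) = p x

/-- The projection `π_P = id + d∘P + P∘d` associated to a homotopy operator `P`. -/
def assocProj (P : A →ₗ[ℝ] A) : A →ₗ[ℝ] A :=
  LinearMap.id + X.d ∘ₗ P + P ∘ₗ X.d

/-- A homotopy operator: a degree `-1` map such that `−d∘P − P∘d` is a projection. -/
def IsHomotopyOperator (P : A →ₗ[ℝ] A) : Prop :=
  X.IsDegree P (-1) ∧ X.IsProjection (-(X.d ∘ₗ P) - P ∘ₗ X.d)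

/-- A homotopy operator `P` is special if `P∘P = 0` and `P∘d∘P = −P`. -/
def IsSpecial (P : A →ₗ[ℝ] A) : Prop :=
  (∀ x : A, P (P x) = 0) ∧ ∀ x : A, P (X.d (P x)) = -(P x)

/-- The symmetry property `⟨Px,y⟩ = (−1)^{deg x} ⟨x,Py⟩` of a propagator. -/
def IsSymmetricDeg (P : A →ₗ[ℝ] A) : Prop :=
  ∀ i : ℤ, ∀ x ∈ X.grading i, ∀ y : A,
    X.pair (P x) y = (-1 : ℝ) ^ i * X.pair x (P y)

/-- A propagator: a homotopy operator satisfying the symmetry property. -/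
def IsPropagator (P : A →ₗ[ℝ] A) : Prop :=
  X.IsHomotopyOperator P ∧ X.IsSymmetricDeg P

/-- A symmetric operator: `⟨px,y⟩ = ⟨x,py⟩`. -/
def IsSymmetric (p : A →ₗ[ℝ] A) : Prop :=
  ∀ x y : A, X.pair (p x) y = X.pair x (p y)

/-- Nondegeneracy of the pairing. -/
def Nondegenerate : Prop :=
  ∀ x : A, (∀ y : A, X.pair x y = 0) → x = 0

/-- The pairing is perfect: the musical map `x ↦ ⟨x,·⟩` is an isomorphism onto the
graded dual, i.e. it is injective and every linear functional on `A^{n-i}` is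
represented by an element of `A^i`. -/
def Perfect : Prop :=
  X.Nondegenerate ∧
    ∀ i : ℤ, ∀ φ : ↥(X.grading (X.n - i)) →ₗ[ℝ] ℝ,
      ∃ x ∈ X.grading i, ∀ y : ↥(X.grading (X.n - i)), X.pair x (y : A) = φ y

/-- A chain map induces an isomorphism on cohomology (elementwise formulation). -/
def IsQuasiIso (f : A →ₗ[ℝ] A) : Prop :=
  (∀ x : A, X.d x = 0 → ∃ y : A, X.d y = 0 ∧ ∃ z : A, f y - x = X.d z) ∧
  (∀ y : A, X.d y = 0 → (∃ z : A, f y = X.d z) → ∃ w : A, y = X.d w)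

/-- A graded subspace: spanned by its homogeneous elements. -/
def IsGradedSubspace (B : Submodule ℝ A) : Prop :=
  ∀ x ∈ B, x ∈ ⨆ i : ℤ, B ⊓ X.grading i

/-- A subcomplex: a graded subspace preserved by the differential. -/
def IsSubcomplex (B : Submodule ℝ A) : Prop :=
  X.IsGradedSubspace B ∧ ∀ x ∈ B, X.d x ∈ B

/-- The inclusion `B ↪ A` is a quasi-isomorphism (elementwise formulation). -/
def InclQuasiIso (B : Submodule ℝ A) : Prop :=
  (∀ x : A, X.d x = 0 → ∃ b ∈ B, X.d b = 0 ∧ ∃ z : A, x - b = X.d z) ∧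
  (∀ b ∈ B, X.d b = 0 → (∃ z : A, b = X.d z) → ∃ c ∈ B, b = X.d c)

/-- The restriction of the pairing to `B` is perfect. -/
def SubPerfect (B : Submodule ℝ A) : Prop :=
  (∀ x ∈ B, (∀ y ∈ B, X.pair x y = 0) → x = 0) ∧
    ∀ i : ℤ, ∀ φ : ↥(B ⊓ X.grading (X.n - i)) →ₗ[ℝ] ℝ,
      ∃ x ∈ B ⊓ X.grading i, ∀ y : ↥(B ⊓ X.grading (X.n - i)), X.pair x (y : A) = φ y

/-- The orthogonal complement `B^⊥ = {x | ⟨x,b⟩ = 0 ∀ b ∈ B}`. -/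
def perp (B : Submodule ℝ A) : Submodule ℝ A where
  carrier := {x : A | ∀ b ∈ B, X.pair x b = 0}
  add_mem' := by
    intro x y hx hy
    intro b hb
    have hx' := hx b hb
    have hy' := hy b hb
    simp only [map_add, LinearMap.add_apply, hx', hy', add_zero]
  zero_mem' := by
    intro b hb
    simp
  smul_mem' := by
    intro c x hx b hb
    have hx' := hx b hb
    simp only [map_smul, LinearMap.smul_apply, hx', smul_zero]

/-- A harmonic subspace: a graded subspace `H` with `ker d = H ⊕ im d`. -/
def IsHarmonic (H : Submodule ℝ A) : Prop :=
  X.IsGradedSubspace H ∧ H ≤ LinearMap.ker X.d ∧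
    H ⊓ LinearMap.range X.d = ⊥ ∧ H ⊔ LinearMap.range X.d = LinearMap.ker X.d

/-- A Hodge decomposition `B = H ⊕ d(B) ⊕ C` of a subcomplex `B ⊆ A` (with respect to
the restricted pairing); taking `B = ⊤` gives a Hodge decomposition of `A`. -/
def IsHodgeOn (B H C : Submodule ℝ A) : Prop :=
  H ≤ B ∧ C ≤ B ∧ X.IsGradedSubspace H ∧ X.IsGradedSubspace C ∧
  H ≤ LinearMap.ker X.d ∧
  H ⊓ Submodule.map X.d B = ⊥ ∧
  H ⊔ Submodule.map X.d B = LinearMap.ker X.d ⊓ B ∧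
  C ⊓ LinearMap.ker X.d = ⊥ ∧
  C ⊔ (LinearMap.ker X.d ⊓ B) = B ∧
  (∀ c ∈ C, ∀ c' ∈ C, X.pair c c' = 0) ∧
  (∀ c ∈ C, ∀ h ∈ H, X.pair c h = 0)

/-- A Hodge decomposition `A = H ⊕ im d ⊕ C` of the full complex. -/
def IsHodge (H C : Submodule ℝ A) : Prop :=
  X.IsHodgeOn ⊤ H C

/-- `A` is of Hodge type if it admits a Hodge decomposition. -/
def IsHodgeType : Prop :=
  ∃ H C : Submodule ℝ A, X.IsHodge H C

/-- The operator `P_{H,C}` canonically associated to a Hodge decomposition `(H,C)`: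
`P(dy) = −y` for `y ∈ C`, and `P = 0` on `H ⊕ C`. -/
def IsHodgeOperator (H C : Submodule ℝ A) (P : A →ₗ[ℝ] A) : Prop :=
  (∀ y ∈ C, P (X.d y) = -y) ∧ (∀ x ∈ H, P x = 0) ∧ ∀ x ∈ C, P x = 0

/-- The degenerate subspace `A_deg = {a | ⟨a,x⟩ = 0 ∀ x}`. -/
def degSub : Submodule ℝ A := X.perp ⊤

/-- The induced pairing on cohomology is nondegenerate (elementwise formulation). -/
def CohomNondeg : Prop :=
  ∀ x : A, X.d x = 0 → (∀ y : A, X.d y = 0 → X.pair x y = 0) → ∃ z : A, x = X.d z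

/-- The induced pairing on cohomology is perfect (elementwise formulation). -/
def CohomPerfect : Prop :=
  X.CohomNondeg ∧
    ∀ i : ℤ, ∀ φ : ↥(LinearMap.ker X.d ⊓ X.grading (X.n - i)) →ₗ[ℝ] ℝ,
      (∀ y : ↥(LinearMap.ker X.d ⊓ X.grading (X.n - i)),
          (∃ z : A, (y : A) = X.d z) → φ y = 0) →
      ∃ x ∈ LinearMap.ker X.d ⊓ X.grading i,
        ∀ y : ↥(LinearMap.ker X.d ⊓ X.grading (X.n - i)), X.pair x (y : A) = φ y

end PairedComplex

namespace PairedComplex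

variable {A : Type*} [AddCommGroup A] [Module ℝ A] (X : PairedComplex A)

/-- A realization of the nondegenerate quotient `Q(A) = A / A_deg`:
a surjective chain map with kernel `A_deg` preserving pairings, gradings and degree. -/
def IsQuotientMap {B : Type*} [AddCommGroup B] [Module ℝ B]
    (Y : PairedComplex B) (q : A →ₗ[ℝ] B) : Prop :=
  Function.Surjective q ∧
  LinearMap.ker q = X.degSub ∧
  (∀ x : A, q (X.d x) = Y.d (q x)) ∧
  (∀ x y : A, Y.pair (q x) (q y) = X.pair x y) ∧
  (∀ i : ℤ, ∀ x ∈ X.grading i, q x ∈ Y.grading i) ∧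
  Y.n = X.n

/-- A Hodge star on a nonnegatively graded cochain complex with pairing of degree `n`:
a degree-reversing involution (up to sign) such that `(x,y) := ⟨x,⋆y⟩` is a positive
definite inner product. -/
def IsHodgeStar (star : A →ₗ[ℝ] A) : Prop :=
  (∀ i : ℤ, ∀ x ∈ X.grading i, star x ∈ X.grading (X.n - i)) ∧
  (∀ i : ℤ, ∀ x ∈ X.grading i, star (star x) = ((-1 : ℝ) ^ (i * (X.n - i))) • x) ∧
  (∀ x y : A, X.pair x (star y) = X.pair y (star x)) ∧
  (∀ x : A, x ≠ 0 → 0 < X.pair x (star x))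

end PairedComplex

/-- A differential graded algebra with pairing: a `PairedComplex` together with an
associative product of degree `0` satisfying the Leibniz rule and compatible with the
pairing. -/
structure PairedDGA (A : Type*) [AddCommGroup A] [Module ℝ A] extends
    PairedComplex A where
  /-- the product -/
  mul : A →ₗ[ℝ] A →ₗ[ℝ] A
  mul_degree : ∀ i j : ℤ, ∀ x ∈ grading i, ∀ y ∈ grading j, mul x y ∈ grading (i + j)
  mul_assoc' : ∀ x y z : A, mul (mul x y) z = mul x (mul y z)
  leibniz : ∀ i : ℤ, ∀ x ∈ grading i, ∀ y : A,
      d (mul x y) = mul (d x) y + ((-1 : ℝ) ^ i) • mul x (d y)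
  pair_mul : ∀ x y z : A, pair (mul x y) z = pair x (mul y z)

namespace PairedDGA

variable {A : Type*} [AddCommGroup A] [Module ℝ A] (Y : PairedDGA A)

/-- `one` is a unit for the product. -/
def IsUnit (one : A) : Prop :=
  one ≠ 0 ∧ one ∈ Y.grading 0 ∧ ∀ x : A, Y.mul one x = x ∧ Y.mul x one = x

/-- graded commutativity. -/
def IsCommutative : Prop :=
  ∀ i j : ℤ, ∀ x ∈ Y.grading i, ∀ y ∈ Y.grading j,
    Y.mul x y = ((-1 : ℝ) ^ (i * j)) • Y.mul y x

/-- An orientation of degree `n` inducing the pairing: a chain-level functional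
supported in degree `n`, vanishing on boundaries, nontrivial on cohomology,
with `⟨x,y⟩ = o(x∧y)`. -/
def IsOrientation (o : A →ₗ[ℝ] ℝ) : Prop :=
  (∀ i : ℤ, i ≠ Y.n → ∀ x ∈ Y.grading i, o x = 0) ∧
  (∀ x : A, o (Y.d x) = 0) ∧
  (∃ x : A, Y.d x = 0 ∧ o x ≠ 0) ∧
  (∀ x y : A, Y.pair x y = o (Y.mul x y))

/-- The small subalgebra `S_P`: the smallest graded dg-subalgebra containing the
harmonic subspace `H_P = im π_P` and preserved by `P`. -/
def smallSub (P : A →ₗ[ℝ] A) : Submodule ℝ A :=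
  sInf {S : Submodule ℝ A |
    LinearMap.range (Y.toPairedComplex.assocProj P) ≤ S ∧
    Y.toPairedComplex.IsGradedSubspace S ∧
    (∀ x ∈ S, Y.d x ∈ S) ∧
    (∀ x ∈ S, ∀ y ∈ S, Y.mul x y ∈ S) ∧
    (∀ x ∈ S, P x ∈ S)}

end PairedDGA

/-- Elements of `A` obtained from homogeneous elements of the harmonic subspace
`H_P = im π_P` by iterated applications of `P` and of the product. -/
inductive TreeGen {A : Type*} [AddCommGroup A] [Module ℝ A]
    (Y : PairedDGA A) (P : A →ₗ[ℝ] A) : A → Prop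
  | base : ∀ (i : ℤ) (x : A), x ∈ Y.grading i →
      x ∈ LinearMap.range (Y.toPairedComplex.assocProj P) → TreeGen Y P x
  | mul : ∀ x y : A, TreeGen Y P x → TreeGen Y P y → TreeGen Y P (Y.mul x y)
  | app : ∀ x : A, TreeGen Y P x → TreeGen Y P (P x)

/-!
Since `A_deg` is an acyclic graded subcomplex, it has a contracting homotopy `h`, and
`r = d h + h d` is a chain projection onto `A_deg`; its kernel `E` is a graded subcomplex with
`A = E ⊕ A_deg`. The pairing is nondegenerate on `E ≅ Q(A)`, which is of finite type, so in each
degree it pairs any complement `N^j` of the cocycles of `E^j` perfectly with the boundaries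
`B^{n-j}`. Shearing `N^j` by the map `L : N^j → B^j` with `⟨z, L y⟩ = -½⟨z, y⟩` for `z ∈ N^{n-j}`
yields an isotropic complement `C^j` of the cocycles, and then `H^i = Z^i ∩ (C^{n-i})^⊥` is
harmonic. Finally `A_deg` has the Hodge decomposition `(0, C')` for any graded complement `C'` of
its cocycles, and Hodge decompositions of mutually orthogonal subcomplexes add up.
-/

lemma Submodule.eq_and_eq_of_add_eq_add {R M : Type*} [Ring R] [AddCommGroup M] [Module R M]
    {E D : Submodule R M} (hED : Disjoint E D) {a b c d : M} (ha : a ∈ E) (hb : b ∈ E)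
    (hc : c ∈ D) (hd : d ∈ D) (h : a + c = b + d) : a = b ∧ c = d := by
  have hab : a - b = d - c := sub_eq_sub_iff_add_eq_add.2 (by rw [h, add_comm])
  have h0 : a - b = 0 := Submodule.disjoint_def.1 hED _ (sub_mem ha hb) (hab ▸ sub_mem hd hc)
  exact ⟨sub_eq_zero.1 h0, (sub_eq_zero.1 (hab ▸ h0 : d - c = 0)).symm⟩

lemma Submodule.sup_inf_sup_eq_bot {R M : Type*} [Ring R] [AddCommGroup M] [Module R M]
    {E D S₁ S₂ T₁ T₂ : Submodule R M} (hED : Disjoint E D) (hS₁ : S₁ ≤ E) (hT₁ : T₁ ≤ E)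
    (hS₂ : S₂ ≤ D) (hT₂ : T₂ ≤ D) (h₁ : S₁ ⊓ T₁ = ⊥) (h₂ : S₂ ⊓ T₂ = ⊥) :
    (S₁ ⊔ S₂) ⊓ (T₁ ⊔ T₂) = ⊥ := by
  refine eq_bot_iff.2 fun x ⟨hxS, hxT⟩ => ?_
  obtain ⟨s₁, hs₁, s₂, hs₂, rfl⟩ := Submodule.mem_sup.1 hxS
  obtain ⟨t₁, ht₁, t₂, ht₂, hst⟩ := Submodule.mem_sup.1 hxT
  obtain ⟨rfl, rfl⟩ := eq_and_eq_of_add_eq_add hED (hT₁ ht₁) (hS₁ hs₁) (hT₂ ht₂) (hS₂ hs₂) hst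
  have hs₁0 : t₁ ∈ S₁ ⊓ T₁ := ⟨hs₁, ht₁⟩
  have hs₂0 : t₂ ∈ S₂ ⊓ T₂ := ⟨hs₂, ht₂⟩
  rw [h₁, mem_bot] at hs₁0
  rw [h₂, mem_bot] at hs₂0
  simp [hs₁0, hs₂0]

namespace PairedComplex

variable {A : Type*} [AddCommGroup A] [Module ℝ A] (X : PairedComplex A)

noncomputable instance : DirectSum.Decomposition X.grading := X.internal.chooseDecomposition

def proj (i : ℤ) : A →ₗ[ℝ] A :=
  (X.grading i).subtype ∘ₗ DirectSum.component ℝ ℤ (fun j => X.grading j) i ∘ₗ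
    (DirectSum.decomposeLinearEquiv X.grading).toLinearMap

variable {X}

lemma proj_apply (i : ℤ) (x : A) : X.proj i x = (DirectSum.decompose X.grading x i : A) := rfl

lemma proj_mem (i : ℤ) (x : A) : X.proj i x ∈ X.grading i :=
  (DirectSum.decompose X.grading x i).2

lemma proj_eq_self {i : ℤ} {x : A} (hx : x ∈ X.grading i) : X.proj i x = x :=
  DirectSum.decompose_of_mem_same _ hx

lemma proj_eq_zero {i j : ℤ} {x : A} (hx : x ∈ X.grading i) (hij : i ≠ j) : X.proj j x = 0 := by
  rw [proj_apply, DirectSum.decompose_of_mem_ne _ hx hij]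

lemma proj_proj (i : ℤ) (x : A) : X.proj i (X.proj i x) = X.proj i x :=
  proj_eq_self (proj_mem i x)

lemma mem_of_forall_proj_mem {S : Submodule ℝ A} {x : A} (h : ∀ i, X.proj i x ∈ S) : x ∈ S := by
  classical
  rw [← DirectSum.sum_support_decompose X.grading x]
  exact Submodule.sum_mem _ fun i _ => h i

lemma eq_zero_of_forall_proj_eq_zero {x : A} (h : ∀ i, X.proj i x = 0) : x = 0 :=
  (Submodule.mem_bot ℝ).1 (mem_of_forall_proj_mem (X := X) fun i => by rw [h i]; exact zero_mem _)

lemma mem_grading_of_forall_proj_eq_zero {i : ℤ} {x : A} (h : ∀ j, j ≠ i → X.proj j x = 0) :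
    x ∈ X.grading i := by
  suffices x - X.proj i x = 0 from sub_eq_zero.1 this ▸ proj_mem i x
  refine eq_zero_of_forall_proj_eq_zero (X := X) fun j => ?_
  rcases eq_or_ne j i with rfl | hj
  · rw [map_sub, proj_proj, sub_self]
  · rw [map_sub, h j hj, proj_eq_zero (proj_mem i x) hj.symm, sub_zero]

lemma mem_grading_of_eq {i j : ℤ} (hij : i = j) {x : A} (hx : x ∈ X.grading i) :
    x ∈ X.grading j :=
  hij ▸ hx

lemma isDegree_d : X.IsDegree X.d 1 := X.d_degree

lemma proj_map_of_isDegree {f : A →ₗ[ℝ] A} {k : ℤ} (hf : X.IsDegree f k) {i j : ℤ}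
    (hij : i + k = j) (x : A) : X.proj j (f x) = f (X.proj i x) := by
  induction x using DirectSum.Decomposition.inductionOn X.grading with
  | zero => simp
  | add a b ha hb => rw [map_add, map_add, map_add, ha, hb, ← map_add]
  | @homogeneous m y =>
    obtain ⟨y, hy⟩ := y
    by_cases hm : m = i
    · subst hm; rw [proj_eq_self hy, proj_eq_self (mem_grading_of_eq hij (hf m y hy))]
    · rw [proj_eq_zero hy hm, map_zero, proj_eq_zero (hf m y hy) (by omega)]

lemma proj_d {i j : ℤ} (hij : i + 1 = j) (x : A) : X.proj j (X.d x) = X.d (X.proj i x) :=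
  proj_map_of_isDegree isDegree_d hij x

section GradedSubspace

variable {S T : Submodule ℝ A} {W : ℤ → Submodule ℝ A}

lemma mem_iSup_iff_forall_proj_mem (hW : ∀ i, W i ≤ X.grading i) {x : A} :
    x ∈ ⨆ i, W i ↔ ∀ i, X.proj i x ∈ W i := by
  refine ⟨fun hx j => ?_,
    fun h => mem_of_forall_proj_mem fun i => Submodule.mem_iSup_of_mem i (h i)⟩
  refine Submodule.iSup_induction (motive := fun y => X.proj j y ∈ W j) W hx (fun i y hy => ?_)
    (by simp) (fun a b ha hb => by rw [map_add]; exact add_mem ha hb)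
  rcases eq_or_ne i j with rfl | hij
  · rwa [proj_eq_self (hW i hy)]
  · rw [proj_eq_zero (hW i hy) hij]; exact zero_mem _

lemma isGradedSubspace_iff : X.IsGradedSubspace S ↔ ∀ x ∈ S, ∀ i, X.proj i x ∈ S :=
  ⟨fun h x hx i => ((mem_iSup_iff_forall_proj_mem (fun _ => inf_le_right)).1 (h x hx) i).1,
    fun h x hx => (mem_iSup_iff_forall_proj_mem (fun _ => inf_le_right)).2
      fun i => ⟨h x hx i, proj_mem i x⟩⟩

lemma IsGradedSubspace.proj_mem (hS : X.IsGradedSubspace S) {x : A} (hx : x ∈ S) (i : ℤ) :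
    X.proj i x ∈ S :=
  isGradedSubspace_iff.1 hS x hx i

lemma IsGradedSubspace.inf (hS : X.IsGradedSubspace S) (hT : X.IsGradedSubspace T) :
    X.IsGradedSubspace (S ⊓ T) :=
  isGradedSubspace_iff.2 fun _ hx i => ⟨hS.proj_mem hx.1 i, hT.proj_mem hx.2 i⟩

lemma IsGradedSubspace.sup (hS : X.IsGradedSubspace S) (hT : X.IsGradedSubspace T) :
    X.IsGradedSubspace (S ⊔ T) :=
  isGradedSubspace_iff.2 fun x hx i => by
    obtain ⟨a, ha, b, hb, rfl⟩ := Submodule.mem_sup.1 hx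
    rw [map_add]
    exact add_mem (Submodule.mem_sup_left (hS.proj_mem ha i))
      (Submodule.mem_sup_right (hT.proj_mem hb i))

lemma isGradedSubspace_iSup (hW : ∀ i, W i ≤ X.grading i) : X.IsGradedSubspace (⨆ i, W i) :=
  isGradedSubspace_iff.2 fun _ hx i =>
    Submodule.mem_iSup_of_mem i ((mem_iSup_iff_forall_proj_mem hW).1 hx i)

lemma isGradedSubspace_top : X.IsGradedSubspace ⊤ :=
  isGradedSubspace_iff.2 fun _ _ _ => trivial

lemma isGradedSubspace_bot : X.IsGradedSubspace ⊥ :=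
  isGradedSubspace_iff.2 fun x hx i => by
    rw [(Submodule.mem_bot ℝ).1 hx, map_zero]
    exact zero_mem _

lemma isGradedSubspace_ker {f : A →ₗ[ℝ] A} {k : ℤ} (hf : X.IsDegree f k) :
    X.IsGradedSubspace (LinearMap.ker f) :=
  isGradedSubspace_iff.2 fun x hx i => by
    rw [LinearMap.mem_ker, ← proj_map_of_isDegree hf rfl, LinearMap.mem_ker.1 hx, map_zero]

lemma IsGradedSubspace.map {f : A →ₗ[ℝ] A} {k : ℤ} (hf : X.IsDegree f k)
    (hS : X.IsGradedSubspace S) : X.IsGradedSubspace (S.map f) :=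
  isGradedSubspace_iff.2 fun _ ⟨y, hy, hyx⟩ i => hyx ▸
    ⟨X.proj (i - k) y, hS.proj_mem hy _, (proj_map_of_isDegree hf (by omega) y).symm⟩

lemma disjoint_iSup_of_forall (hW : ∀ i, W i ≤ X.grading i) (hS : X.IsGradedSubspace S)
    (h : ∀ i, Disjoint (W i) S) : Disjoint (⨆ i, W i) S :=
  Submodule.disjoint_def.2 fun _ hxW hxS => eq_zero_of_forall_proj_eq_zero fun i =>
    Submodule.disjoint_def.1 (h i) _ ((mem_iSup_iff_forall_proj_mem hW).1 hxW i)
      (hS.proj_mem hxS i)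

lemma iSup_sup_eq_of_forall (hWT : ∀ i, W i ≤ T) (hST : S ≤ T) (hT : X.IsGradedSubspace T)
    (h : ∀ i, T ⊓ X.grading i ≤ W i ⊔ S) : (⨆ i, W i) ⊔ S = T :=
  le_antisymm (sup_le (iSup_le hWT) hST) fun x hx => mem_of_forall_proj_mem fun i =>
    sup_le_sup_right (le_iSup W i) S (h i ⟨hT.proj_mem hx i, proj_mem i x⟩)

lemma exists_isGradedSubspace_disjoint_sup_eq (hS : X.IsGradedSubspace S)
    (hT : X.IsGradedSubspace T) (hST : S ≤ T) :
    ∃ W, X.IsGradedSubspace W ∧ Disjoint S W ∧ S ⊔ W = T := by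
  choose W hW hWsup using fun i =>
    IsModularLattice.exists_disjoint_and_sup_eq (inf_le_inf_right (X.grading i) hST)
  have hWle : ∀ i, W i ≤ T ⊓ X.grading i := fun i => hWsup i ▸ le_sup_right
  refine ⟨⨆ i, W i, isGradedSubspace_iSup fun i => (hWle i).trans inf_le_right,
    (disjoint_iSup_of_forall (fun i => (hWle i).trans inf_le_right) hS fun i => ?_).symm, ?_⟩
  · exact Submodule.disjoint_def.2 fun x hxW hxS =>
      Submodule.disjoint_def.1 (hW i) x ⟨hxS, (hWle i hxW).2⟩ hxW
  · rw [sup_comm]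
    exact iSup_sup_eq_of_forall (fun i => (hWle i).trans inf_le_left) hST hT
      fun i => (hWsup i).symm.le.trans (sup_le (le_sup_of_le_right inf_le_left) le_sup_left)

end GradedSubspace

section Pairing

lemma pair_eq_zero_of_forall_proj {x y : A} (h : ∀ i j, X.pair (X.proj i x) (X.proj j y) = 0) :
    X.pair x y = 0 := by
  have hx : x ∈ LinearMap.ker (X.pair.flip y) := mem_of_forall_proj_mem fun i => by
    have hy : y ∈ LinearMap.ker (X.pair (X.proj i x)) := mem_of_forall_proj_mem (h i)
    simpa using hy
  simpa using hx

lemma pair_eq_zero_comm {i j : ℤ} {x y : A} (hx : x ∈ X.grading i) (hy : y ∈ X.grading j) :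
    X.pair x y = 0 ↔ X.pair y x = 0 := by
  rw [X.pair_symm i j x hx y hy, mul_eq_zero, or_iff_right (zpow_ne_zero _ (by norm_num))]

lemma pair_proj_right {i j : ℤ} {x : A} (hx : x ∈ X.grading i) (hij : i + j = X.n) (y : A) :
    X.pair x (X.proj j y) = X.pair x y := by
  rw [← sub_eq_zero, ← map_sub]
  refine pair_eq_zero_of_forall_proj fun k m => ?_
  rcases eq_or_ne m j with rfl | hm
  · rw [map_sub, proj_proj, sub_self, map_zero]
  rcases eq_or_ne k i with rfl | hk
  · exact X.pair_degree k m (by omega) _ (proj_mem k x) _ (proj_mem m _)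
  · rw [proj_eq_zero hx hk.symm, map_zero, LinearMap.zero_apply]

lemma pair_proj_left {i j : ℤ} {y : A} (hy : y ∈ X.grading j) (hij : i + j = X.n)
    (x : A) : X.pair (X.proj i x) y = X.pair x y := by
  rw [← sub_eq_zero, ← LinearMap.sub_apply, ← map_sub]
  refine pair_eq_zero_of_forall_proj fun k m => ?_
  rcases eq_or_ne k i with rfl | hk
  · rw [map_sub, proj_proj, sub_self, map_zero, LinearMap.zero_apply]
  rcases eq_or_ne m j with rfl | hm
  · exact X.pair_degree k m (by omega) _ (proj_mem k _) _ (proj_mem m y)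
  · rw [proj_eq_zero hy hm.symm, map_zero]

lemma pair_d_eq_zero_iff {i : ℤ} {x : A} (hx : x ∈ X.grading i) (y : A) :
    X.pair (X.d x) y = 0 ↔ X.pair x (X.d y) = 0 := by
  rw [X.pair_d i x hx y, mul_eq_zero, or_iff_right (zpow_ne_zero _ (by norm_num))]

lemma pair_d_eq_zero_of_d_eq_zero {i : ℤ} {z : A} (hz : z ∈ X.grading i) (hdz : X.d z = 0)
    (y : A) : X.pair z (X.d y) = 0 :=
  (pair_d_eq_zero_iff hz y).1 (by rw [hdz, map_zero, LinearMap.zero_apply])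

lemma pair_eq_zero_of_mem_iSup {W V : ℤ → Submodule ℝ A} (hW : ∀ i, W i ≤ X.grading i)
    (hV : ∀ i, V i ≤ X.grading i)
    (h : ∀ i j, i + j = X.n → ∀ w ∈ W i, ∀ v ∈ V j, X.pair w v = 0) {x y : A}
    (hx : x ∈ ⨆ i, W i) (hy : y ∈ ⨆ i, V i) : X.pair x y = 0 :=
  pair_eq_zero_of_forall_proj fun i j => by
    by_cases hij : i + j = X.n
    · exact h i j hij _ ((mem_iSup_iff_forall_proj_mem hW).1 hx i) _
        ((mem_iSup_iff_forall_proj_mem hV).1 hy j)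
    · exact X.pair_degree i j hij _ (proj_mem i x) _ (proj_mem j y)

end Pairing

section Degenerate

lemma pair_degSub_left {u : A} (hu : u ∈ X.degSub) (y : A) : X.pair u y = 0 :=
  hu y trivial

lemma isGradedSubspace_degSub : X.IsGradedSubspace X.degSub :=
  isGradedSubspace_iff.2 fun x hx i y _ => by
    rw [← pair_proj_right (proj_mem i x) (add_sub_cancel i X.n),
      pair_proj_left (proj_mem _ y) (add_sub_cancel i X.n)]
    exact pair_degSub_left hx _

lemma pair_degSub_right {u : A} (hu : u ∈ X.degSub) (x : A) : X.pair x u = 0 :=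
  pair_eq_zero_of_forall_proj fun i j => (pair_eq_zero_comm (proj_mem i x) (proj_mem j u)).2
    (pair_degSub_left (isGradedSubspace_degSub.proj_mem hu j) _)

lemma d_mem_degSub {u : A} (hu : u ∈ X.degSub) : X.d u ∈ X.degSub :=
  mem_of_forall_proj_mem fun i y _ => by
    rw [proj_d (sub_add_cancel i 1), pair_d_eq_zero_iff (proj_mem _ u)]
    exact pair_degSub_left (isGradedSubspace_degSub.proj_mem hu _) _

end Degenerate

section Splitting

variable {D : Submodule ℝ A}

lemma projection_mem_grading {P Q : Submodule ℝ A} (hP : X.IsGradedSubspace P)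
    (hQ : X.IsGradedSubspace Q) (hPQ : IsCompl P Q) {i : ℤ} {x : A} (hx : x ∈ X.grading i) :
    P.projection Q hPQ x ∈ X.grading i := by
  set a := P.projection Q hPQ x
  have ha : a ∈ P := Submodule.projection_apply_mem hPQ x
  have hb : x - a ∈ Q := Submodule.sub_projection_mem hPQ x
  have hsplit : a - X.proj i a = X.proj i (x - a) - (x - a) := by
    rw [map_sub, proj_eq_self hx]; abel
  have hmem : a - X.proj i a ∈ P ⊓ Q :=
    ⟨sub_mem ha (hP.proj_mem ha i), hsplit ▸ sub_mem (hQ.proj_mem hb i) hb⟩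
  rw [hPQ.inf_eq_bot, Submodule.mem_bot, sub_eq_zero] at hmem
  exact hmem ▸ proj_mem i a

lemma mem_grading_of_d_mem {K : Submodule ℝ A} (hK : X.IsGradedSubspace K)
    (hKd : Disjoint K (LinearMap.ker X.d)) {i : ℤ} {k : A} (hk : k ∈ K)
    (hdk : X.d k ∈ X.grading (i + 1)) : k ∈ X.grading i :=
  mem_grading_of_forall_proj_eq_zero fun j hj => Submodule.disjoint_def.1 hKd _ (hK.proj_mem hk j)
    (by rw [LinearMap.mem_ker, ← proj_d rfl, proj_eq_zero hdk (by omega)])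

lemma exists_linearEquiv_d_of_acyclic {D K : Submodule ℝ A} (hdD : ∀ x ∈ D, X.d x ∈ D)
    (hacyc : ∀ x ∈ D, X.d x = 0 → ∃ z ∈ D, x = X.d z)
    (hZK : Disjoint (LinearMap.ker X.d ⊓ D) K) (hZKD : LinearMap.ker X.d ⊓ D ⊔ K = D) :
    ∃ e : K ≃ₗ[ℝ] ↥(LinearMap.ker X.d ⊓ D), ∀ k, (e k : A) = X.d k := by
  have hKD : K ≤ D := hZKD ▸ le_sup_right
  have hdK : ∀ k ∈ K, X.d k ∈ LinearMap.ker X.d ⊓ D := fun k hk => ⟨X.d_sq k, hdD k (hKD hk)⟩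
  refine ⟨LinearEquiv.ofBijective (X.d.restrict hdK) ⟨fun k k' hkk' => ?_, fun z => ?_⟩,
    fun _ => rfl⟩
  · refine Subtype.ext (sub_eq_zero.1 (Submodule.disjoint_def.1 hZK _ ⟨?_, ?_⟩ (sub_mem k.2 k'.2)))
    · show X.d (k - k' : A) = 0
      rw [map_sub, sub_eq_zero]
      exact congrArg Subtype.val hkk'
    · exact sub_mem (hKD k.2) (hKD k'.2)
  · obtain ⟨y, hy, hzy⟩ := hacyc z z.2.2 z.2.1
    obtain ⟨z', hz', k, hk, rfl⟩ := Submodule.mem_sup.1 (hZKD.symm ▸ hy : y ∈ _ ⊔ K)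
    refine ⟨⟨k, hk⟩, Subtype.ext ?_⟩
    simp [hzy, LinearMap.mem_ker.1 hz'.1]

lemma exists_contracting_homotopy (hD : X.IsGradedSubspace D) (hdD : ∀ x ∈ D, X.d x ∈ D)
    (hacyc : ∀ x ∈ D, X.d x = 0 → ∃ z ∈ D, x = X.d z) :
    ∃ h : A →ₗ[ℝ] A, X.IsDegree h (-1) ∧ (∀ x, h x ∈ D) ∧
      ∀ x ∈ D, X.d (h x) + h (X.d x) = x := by
  set Z := LinearMap.ker X.d ⊓ D
  have hZ : X.IsGradedSubspace Z := (isGradedSubspace_ker isDegree_d).inf hD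
  obtain ⟨K, hK, hZK, hZKD⟩ := exists_isGradedSubspace_disjoint_sup_eq hZ hD inf_le_right
  obtain ⟨F, hF, hDF, hDFtop⟩ :=
    exists_isGradedSubspace_disjoint_sup_eq hD isGradedSubspace_top le_top
  have hKD : K ≤ D := hZKD ▸ le_sup_right
  have hKd : Disjoint K (LinearMap.ker X.d) := Submodule.disjoint_def.2 fun k hk hdk =>
    Submodule.disjoint_def.1 hZK k ⟨hdk, hKD hk⟩ hk
  have hcompl : IsCompl Z (K ⊔ F) :=
    hZK.isCompl_sup_right_of_isCompl_sup_left (hZKD ▸ ⟨hDF, codisjoint_iff.2 hDFtop⟩)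
  obtain ⟨e, he⟩ := exists_linearEquiv_d_of_acyclic hdD hacyc hZK hZKD
  have hde : ∀ z : Z, X.d (e.symm z) = z := fun z => by rw [← he, e.apply_symm_apply]
  set h := K.subtype ∘ₗ e.symm.toLinearMap ∘ₗ Z.projectionOnto (K ⊔ F) hcompl
  have hZh : ∀ z (hz : z ∈ Z), h z = e.symm ⟨z, hz⟩ := fun z hz => by
    simp [h, Submodule.projectionOnto_apply_of_mem_left hcompl hz]
  have hKh : ∀ k ∈ K, h k = 0 := fun k hk => by
    simp [h, Submodule.projectionOnto_apply_of_mem_right hcompl (Submodule.mem_sup_left hk)]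
  have hdh : ∀ x, X.d (h x) = Z.projection (K ⊔ F) hcompl x := fun x => hde _
  refine ⟨h, fun i x hx => ?_, fun x => hKD (e.symm _).2, fun x hx => ?_⟩
  · refine mem_grading_of_d_mem hK hKd (e.symm _).2 ?_
    rw [hdh]
    exact mem_grading_of_eq (by omega) (projection_mem_grading hZ (hK.sup hF) hcompl hx)
  obtain ⟨z, hz, k, hk, rfl⟩ := Submodule.mem_sup.1 (hZKD.symm ▸ hx : x ∈ Z ⊔ K)
  have hdk : X.d k ∈ Z := ⟨X.d_sq k, hdD k (hKD hk)⟩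
  have hek : e.symm ⟨X.d k, hdk⟩ = ⟨k, hk⟩ := e.symm_apply_eq.2 (Subtype.ext (he ⟨k, hk⟩).symm)
  have hdz : X.d z = 0 := hz.1
  rw [map_add h, hKh k hk, add_zero, hZh z hz, hde, map_add X.d, hdz, zero_add, hZh _ hdk, hek]

lemma exists_isCompl_subcomplex (hD : X.IsGradedSubspace D) (hdD : ∀ x ∈ D, X.d x ∈ D)
    (hacyc : ∀ x ∈ D, X.d x = 0 → ∃ z ∈ D, x = X.d z) :
    ∃ E, X.IsGradedSubspace E ∧ (∀ x ∈ E, X.d x ∈ E) ∧ IsCompl E D := by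
  obtain ⟨h, hdeg, hhD, hhtpy⟩ := exists_contracting_homotopy hD hdD hacyc
  set r := X.d ∘ₗ h + h ∘ₗ X.d
  have hr : ∀ x ∈ D, r x = x := hhtpy
  have hrD : ∀ x, r x ∈ D := fun x => add_mem (hdD _ (hhD x)) (hhD _)
  have hrd : ∀ x, r (X.d x) = X.d (r x) := fun x => by simp [r, X.d_sq]
  have hrdeg : X.IsDegree r 0 := fun i x hx =>
    add_mem (mem_grading_of_eq (by omega) (X.d_degree _ _ (hdeg i x hx)))
      (mem_grading_of_eq (by omega) (hdeg _ _ (X.d_degree i x hx)))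
  refine ⟨LinearMap.ker r, isGradedSubspace_ker hrdeg, fun x hx => ?_,
    Submodule.disjoint_def.2 fun x hxE hxD => (hr x hxD).symm.trans hxE,
    codisjoint_iff.2 (eq_top_iff.2 fun x _ => ?_)⟩
  · rw [LinearMap.mem_ker, hrd, LinearMap.mem_ker.1 hx, map_zero]
  · rw [← sub_add_cancel x (r x)]
    refine Submodule.add_mem_sup ?_ (hrD x)
    rw [LinearMap.mem_ker, map_sub, hr _ (hrD x), sub_self]

end Splitting

section HodgeDecomposition

variable {E D : Submodule ℝ A}

lemma ker_d_inf_sup (hdE : ∀ x ∈ E, X.d x ∈ E) (hdD : ∀ x ∈ D, X.d x ∈ D)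
    (hED : Disjoint E D) :
    LinearMap.ker X.d ⊓ (E ⊔ D) = (LinearMap.ker X.d ⊓ E) ⊔ (LinearMap.ker X.d ⊓ D) := by
  refine le_antisymm (fun x ⟨hx, hxED⟩ => ?_) (sup_le (inf_le_inf_left _ le_sup_left)
    (inf_le_inf_left _ le_sup_right))
  obtain ⟨e, he, u, hu, rfl⟩ := Submodule.mem_sup.1 hxED
  obtain ⟨hde, hdu⟩ := Submodule.eq_and_eq_of_add_eq_add hED (hdE e he) (zero_mem _)
    (hdD u hu) (zero_mem _) (by rw [← map_add, hx, add_zero])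
  exact Submodule.add_mem_sup ⟨hde, he⟩ ⟨hdu, hu⟩

lemma IsHodgeOn.sup {H₁ C₁ H₂ C₂ : Submodule ℝ A} (hdE : ∀ x ∈ E, X.d x ∈ E)
    (hdD : ∀ x ∈ D, X.d x ∈ D) (hED : Disjoint E D)
    (horth : ∀ e ∈ E, ∀ u ∈ D, X.pair e u = 0 ∧ X.pair u e = 0)
    (h₁ : X.IsHodgeOn E H₁ C₁) (h₂ : X.IsHodgeOn D H₂ C₂) :
    X.IsHodgeOn (E ⊔ D) (H₁ ⊔ H₂) (C₁ ⊔ C₂) := by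
  obtain ⟨hH₁, hC₁, hH₁g, hC₁g, hH₁Z, hH₁B, hH₁Bsup, hC₁Z, hC₁Zsup, hC₁C₁, hC₁H₁⟩ := h₁
  obtain ⟨hH₂, hC₂, hH₂g, hC₂g, hH₂Z, hH₂B, hH₂Bsup, hC₂Z, hC₂Zsup, hC₂C₂, hC₂H₂⟩ := h₂
  have hZ := ker_d_inf_sup hdE hdD hED
  refine ⟨sup_le_sup hH₁ hH₂, sup_le_sup hC₁ hC₂, hH₁g.sup hH₂g, hC₁g.sup hC₂g,
    sup_le hH₁Z hH₂Z, ?_, ?_, ?_, ?_, ?_, ?_⟩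
  · rw [Submodule.map_sup]
    exact Submodule.sup_inf_sup_eq_bot hED hH₁ (Submodule.map_le_iff_le_comap.2 hdE) hH₂
      (Submodule.map_le_iff_le_comap.2 hdD) hH₁B hH₂B
  · rw [Submodule.map_sup, hZ, ← hH₁Bsup, ← hH₂Bsup, sup_sup_sup_comm]
  · rw [← inf_eq_left.2 (sup_le_sup hC₁ hC₂), inf_assoc, inf_comm (E ⊔ D), hZ]
    exact Submodule.sup_inf_sup_eq_bot hED hC₁ inf_le_right hC₂ inf_le_right
      (by rw [← inf_assoc, hC₁Z, bot_inf_eq]) (by rw [← inf_assoc, hC₂Z, bot_inf_eq])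
  · rw [hZ, sup_sup_sup_comm, hC₁Zsup, hC₂Zsup]
  · intro c hc c' hc'
    obtain ⟨c₁, hc₁, c₂, hc₂, rfl⟩ := Submodule.mem_sup.1 hc
    obtain ⟨c₁', hc₁', c₂', hc₂', rfl⟩ := Submodule.mem_sup.1 hc'
    simp only [map_add, LinearMap.add_apply, hC₁C₁ c₁ hc₁ c₁' hc₁', hC₂C₂ c₂ hc₂ c₂' hc₂',
      (horth _ (hC₁ hc₁) _ (hC₂ hc₂')).1, (horth _ (hC₁ hc₁') _ (hC₂ hc₂)).2, add_zero]
  · intro c hc a ha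
    obtain ⟨c₁, hc₁, c₂, hc₂, rfl⟩ := Submodule.mem_sup.1 hc
    obtain ⟨a₁, ha₁, a₂, ha₂, rfl⟩ := Submodule.mem_sup.1 ha
    simp only [map_add, LinearMap.add_apply, hC₁H₁ c₁ hc₁ a₁ ha₁, hC₂H₂ c₂ hc₂ a₂ ha₂,
      (horth _ (hC₁ hc₁) _ (hH₂ ha₂)).1, (horth _ (hH₁ ha₁) _ (hC₂ hc₂)).2, add_zero]

lemma exists_isHodgeOn_bot_of_acyclic (hD : X.IsGradedSubspace D) (hdD : ∀ x ∈ D, X.d x ∈ D)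
    (hacyc : ∀ x ∈ D, X.d x = 0 → ∃ z ∈ D, x = X.d z)
    (hiso : ∀ x ∈ D, ∀ y ∈ D, X.pair x y = 0) : ∃ C, X.IsHodgeOn D ⊥ C := by
  obtain ⟨C, hC, hZC, hZCD⟩ := exists_isGradedSubspace_disjoint_sup_eq
    ((isGradedSubspace_ker isDegree_d).inf hD) hD inf_le_right
  have hCD : C ≤ D := hZCD ▸ le_sup_right
  refine ⟨C, bot_le, hCD, isGradedSubspace_bot, hC, bot_le, bot_inf_eq _, ?_, ?_,
    by rw [sup_comm, hZCD], fun c hc c' hc' => hiso c (hCD hc) c' (hCD hc'),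
    fun c _ a ha => by rw [(Submodule.mem_bot ℝ).1 ha, map_zero]⟩
  · rw [bot_sup_eq]
    refine le_antisymm ?_ fun x ⟨hdx, hx⟩ => ?_
    · rintro _ ⟨y, hy, rfl⟩
      exact ⟨X.d_sq y, hdD y hy⟩
    · obtain ⟨z, hz, rfl⟩ := hacyc x hx hdx
      exact ⟨z, hz, rfl⟩
  · exact eq_bot_iff.2 fun c ⟨hc, hdc⟩ =>
      Submodule.disjoint_def.1 hZC c ⟨hdc, hCD hc⟩ hc

end HodgeDecomposition

section Nondegenerate

variable {E : Submodule ℝ A}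

variable (X) in
def IsCocycleCompl (E : Submodule ℝ A) (i : ℤ) (K : Submodule ℝ A) : Prop :=
  K ≤ E ⊓ X.grading i ∧ Disjoint K (LinearMap.ker X.d) ∧
    E ⊓ X.grading i ≤ K ⊔ LinearMap.ker X.d

lemma exists_isCocycleCompl (E : Submodule ℝ A) (i : ℤ) : ∃ K, X.IsCocycleCompl E i K := by
  obtain ⟨K, hZK, hZKsup⟩ := IsModularLattice.exists_disjoint_and_sup_eq
    (inf_le_right : LinearMap.ker X.d ⊓ (E ⊓ X.grading i) ≤ E ⊓ X.grading i)
  have hK : K ≤ E ⊓ X.grading i := hZKsup ▸ le_sup_right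
  refine ⟨K, hK, Submodule.disjoint_def.2 fun y hy hdy =>
    Submodule.disjoint_def.1 hZK y ⟨hdy, hK hy⟩ hy, ?_⟩
  exact hZKsup.symm.le.trans (sup_le (le_sup_of_le_right inf_le_left) le_sup_left)

lemma isCocycleCompl_range_add {i : ℤ} (hdE : ∀ x ∈ E, X.d x ∈ E) {N : Submodule ℝ A}
    (hN : X.IsCocycleCompl E i N) (L : N →ₗ[ℝ] ↥(Submodule.map X.d E ⊓ X.grading i)) :
    X.IsCocycleCompl E i (LinearMap.range (N.subtype + Submodule.subtype _ ∘ₗ L)) := by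
  obtain ⟨hNE, hNd, hNsup⟩ := hN
  have hL : ∀ y, (L y : A) ∈ E ⊓ X.grading i ∧ X.d (L y) = 0 := fun y => by
    obtain ⟨⟨e, he, hey⟩, hyi⟩ := (L y).2
    exact ⟨⟨hey ▸ hdE e he, hyi⟩, by rw [← hey, X.d_sq]⟩
  refine ⟨?_, Submodule.disjoint_def.2 ?_, fun x hx => ?_⟩
  · rintro _ ⟨y, rfl⟩
    exact add_mem (hNE y.2) (hL y).1
  · rintro _ ⟨y, rfl⟩ hdy
    have hy : (y : A) = 0 := Submodule.disjoint_def.1 hNd y y.2 (by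
      simpa [LinearMap.mem_ker, (hL y).2] using hdy)
    simp [(Submodule.coe_eq_zero.1 hy : y = 0)]
  · obtain ⟨y, hy, z, hz, rfl⟩ := Submodule.mem_sup.1 (hNsup hx)
    rw [← add_sub_cancel (L ⟨y, hy⟩ : A) z, ← add_assoc]
    exact Submodule.add_mem_sup ⟨⟨y, hy⟩, rfl⟩ (sub_mem hz (hL ⟨y, hy⟩).2)

lemma eq_zero_of_forall_pair_eq_zero_left (hE : X.IsGradedSubspace E)
    (hnd : ∀ x ∈ E, (∀ y ∈ E, X.pair x y = 0) → x = 0) {i j : ℤ} (hij : i + j = X.n) {x : A}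
    (hx : x ∈ E ⊓ X.grading i) (h : ∀ y ∈ E ⊓ X.grading j, X.pair x y = 0) : x = 0 :=
  hnd x hx.1 fun y hy => pair_proj_right hx.2 hij y ▸ h _ ⟨hE.proj_mem hy j, proj_mem j y⟩

lemma eq_zero_of_forall_pair_eq_zero_right (hE : X.IsGradedSubspace E)
    (hnd : ∀ x ∈ E, (∀ y ∈ E, X.pair x y = 0) → x = 0) {i j : ℤ} (hij : i + j = X.n) {x : A}
    (hx : x ∈ E ⊓ X.grading i) (h : ∀ y ∈ E ⊓ X.grading j, X.pair y x = 0) : x = 0 :=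
  eq_zero_of_forall_pair_eq_zero_left hE hnd hij hx fun y hy =>
    (pair_eq_zero_comm hx.2 hy.2).2 (h y hy)

lemma isPerfPair_boundaries (hE : X.IsGradedSubspace E) (hdE : ∀ x ∈ E, X.d x ∈ E)
    (hnd : ∀ x ∈ E, (∀ y ∈ E, X.pair x y = 0) → x = 0)
    [∀ i, FiniteDimensional ℝ ↥(E ⊓ X.grading i)] {i j : ℤ} (hij : i + j = X.n)
    {K : Submodule ℝ A} (hK : X.IsCocycleCompl E j K) :
    (X.pair.compl₁₂ K.subtype (Submodule.map X.d E ⊓ X.grading i).subtype).IsPerfPair := by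
  obtain ⟨hKE, hKd, hKsup⟩ := hK
  have : FiniteDimensional ℝ K := Submodule.finiteDimensional_of_le hKE
  refine .of_injective (injective_iff_map_eq_zero _ |>.2 fun k hk => ?_)
    (injective_iff_map_eq_zero _ |>.2 fun b hb => ?_)
  · have hkb : ∀ b ∈ Submodule.map X.d E ⊓ X.grading i, X.pair k b = 0 := fun b hb' => by
      simpa using LinearMap.congr_fun hk ⟨b, hb'⟩
    refine Subtype.ext (Submodule.disjoint_def.1 hKd _ k.2 ?_)
    refine eq_zero_of_forall_pair_eq_zero_left hE hnd (i := j + 1) (j := i - 1) (by omega)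
      ⟨hdE _ (hKE k.2).1, X.d_degree _ _ (hKE k.2).2⟩ fun y hy => ?_
    rw [pair_d_eq_zero_iff (hKE k.2).2]
    exact hkb _ ⟨⟨y, hy.1, rfl⟩, mem_grading_of_eq (by omega) (X.d_degree _ _ hy.2)⟩
  · have hkb : ∀ k ∈ K, X.pair k b = 0 := fun k hk => by
      simpa using LinearMap.congr_fun hb ⟨k, hk⟩
    obtain ⟨⟨e, he, hbe⟩, hbi⟩ := b.2
    refine Subtype.ext (eq_zero_of_forall_pair_eq_zero_right hE hnd hij
      ⟨hbe ▸ hdE e he, hbi⟩ fun y hy => ?_)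
    obtain ⟨k, hk, z, hz, rfl⟩ := Submodule.mem_sup.1 (hKsup hy)
    have hzj : z ∈ X.grading j := by simpa using sub_mem hy.2 (hKE hk).2
    rw [map_add, LinearMap.add_apply, hkb k hk, zero_add, ← hbe]
    exact pair_d_eq_zero_of_d_eq_zero hzj hz e

lemma exists_shear_to_boundaries (hE : X.IsGradedSubspace E) (hdE : ∀ x ∈ E, X.d x ∈ E)
    (hnd : ∀ x ∈ E, (∀ y ∈ E, X.pair x y = 0) → x = 0)
    [∀ i, FiniteDimensional ℝ ↥(E ⊓ X.grading i)] {N : ℤ → Submodule ℝ A}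
    (hN : ∀ i, X.IsCocycleCompl E i (N i)) :
    ∃ L : ∀ i, N i →ₗ[ℝ] ↥(Submodule.map X.d E ⊓ X.grading i), ∀ i j, i + j = X.n →
      ∀ (y : N i), ∀ z ∈ N j, X.pair z (L i y) = -2⁻¹ * X.pair z y := by
  suffices ∀ i, ∃ L : N i →ₗ[ℝ] ↥(Submodule.map X.d E ⊓ X.grading i), ∀ (y : N i),
      ∀ z ∈ N (X.n - i), X.pair z (L y) = -2⁻¹ * X.pair z y by
    choose L hL using this
    refine ⟨L, fun i j hij y z hz => ?_⟩
    obtain rfl : j = X.n - i := by omega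
    exact hL i y z hz
  intro i
  let ℓ := X.pair.compl₁₂ (N (X.n - i)).subtype (Submodule.map X.d E ⊓ X.grading i).subtype
  have : ℓ.IsPerfPair := isPerfPair_boundaries hE hdE hnd (by omega) (hN _)
  let φ := (-2⁻¹ : ℝ) • (X.pair.compl₁₂ (N (X.n - i)).subtype (N i).subtype).flip
  refine ⟨ℓ.flip.toPerfPair.symm.toLinearMap ∘ₗ φ, fun y z hz => ?_⟩
  simpa [ℓ, φ] using ℓ.apply_toPerfPair_flip (φ y) ⟨z, hz⟩

lemma exists_isotropic_isCocycleCompl (hE : X.IsGradedSubspace E) (hdE : ∀ x ∈ E, X.d x ∈ E)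
    (hnd : ∀ x ∈ E, (∀ y ∈ E, X.pair x y = 0) → x = 0)
    [∀ i, FiniteDimensional ℝ ↥(E ⊓ X.grading i)] :
    ∃ C : ℤ → Submodule ℝ A, (∀ i, X.IsCocycleCompl E i (C i)) ∧
      ∀ i j, i + j = X.n → ∀ c ∈ C i, ∀ c' ∈ C j, X.pair c c' = 0 := by
  choose N hN using exists_isCocycleCompl (X := X) E
  obtain ⟨L, hL⟩ := exists_shear_to_boundaries hE hdE hnd hN
  refine ⟨fun i => LinearMap.range ((N i).subtype + Submodule.subtype _ ∘ₗ L i),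
    fun i => isCocycleCompl_range_add hdE (hN i) (L i), ?_⟩
  rintro i j hij _ ⟨y, rfl⟩ _ ⟨y', rfl⟩
  have hLi : (L i y : A) ∈ X.grading i := (L i y).2.2
  have hyy' := X.pair_symm i j _ ((hN i).1 y.2).2 _ ((hN j).1 y'.2).2
  have hLyy' := X.pair_symm i j _ hLi _ ((hN j).1 y'.2).2
  have hLL : X.pair (L i y) (L j y') = 0 := by
    obtain ⟨⟨e, -, he⟩, -⟩ := (L j y').2
    obtain ⟨⟨e', -, he'⟩, -⟩ := (L i y).2
    rw [← he]
    exact pair_d_eq_zero_of_d_eq_zero hLi (by rw [← he', X.d_sq]) e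
  -- each of the two cross terms contributes `-½⟨y, y'⟩`, cancelling `⟨y, y'⟩`
  simp only [LinearMap.add_apply, LinearMap.comp_apply, Submodule.subtype_apply, map_add]
  rw [hL j i (by omega) y' y y.2, hLyy', hL i j hij y y' y'.2, hLL]
  linear_combination (1 / 2 : ℝ) * hyy'

lemma exists_harmonic (hE : X.IsGradedSubspace E) (hdE : ∀ x ∈ E, X.d x ∈ E)
    (hnd : ∀ x ∈ E, (∀ y ∈ E, X.pair x y = 0) → x = 0)
    [∀ i, FiniteDimensional ℝ ↥(E ⊓ X.grading i)] {i j : ℤ} (hij : i + j = X.n)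
    {K : Submodule ℝ A} (hK : X.IsCocycleCompl E j K) :
    ∃ H, H ≤ LinearMap.ker X.d ⊓ (E ⊓ X.grading i) ∧ Disjoint H (Submodule.map X.d E) ∧
      LinearMap.ker X.d ⊓ (E ⊓ X.grading i) ≤ H ⊔ Submodule.map X.d E ∧
      ∀ c ∈ K, ∀ h ∈ H, X.pair c h = 0 := by
  let ℓ := X.pair.compl₁₂ K.subtype (Submodule.map X.d E ⊓ X.grading i).subtype
  have hℓ : Function.Bijective ℓ.flip := (isPerfPair_boundaries hE hdE hnd hij hK).bijective_right
  have hcomm : ∀ c ∈ K, ∀ x ∈ X.grading i, X.pair c x = 0 ↔ X.pair x c = 0 :=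
    fun c hc x hx => pair_eq_zero_comm (hK.1 hc).2 hx
  refine ⟨LinearMap.ker X.d ⊓ (E ⊓ X.grading i) ⊓ X.perp K, inf_le_left,
    Submodule.disjoint_def.2 fun b hbH hbB => ?_, fun z hz => ?_,
    fun c hc h hh => (hcomm c hc h hh.1.2.2).2 (hh.2 c hc)⟩
  · have hb : (⟨b, hbB, hbH.1.2.2⟩ : ↥(Submodule.map X.d E ⊓ X.grading i)) = 0 := by
      refine (injective_iff_map_eq_zero _).1 hℓ.1 _ ?_
      ext k
      simpa [ℓ] using (hcomm k k.2 b hbH.1.2.2).2 (hbH.2 k k.2)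
    exact congrArg Subtype.val hb
  · obtain ⟨⟨b, hbB, hbi⟩, hb⟩ := hℓ.2 ((X.pair.flip z).comp K.subtype)
    have hbk : ∀ k ∈ K, X.pair k b = X.pair k z := fun k hk => by
      simpa [ℓ] using LinearMap.congr_fun hb ⟨k, hk⟩
    obtain ⟨e, he, rfl⟩ := hbB
    rw [← sub_add_cancel z (X.d e)]
    refine Submodule.add_mem_sup ⟨⟨?_, sub_mem hz.2 ⟨hdE e he, hbi⟩⟩, fun k hk => ?_⟩ ⟨e, he, rfl⟩
    · show X.d (z - X.d e) = 0
      rw [map_sub, X.d_sq, sub_zero]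
      exact hz.1
    · refine (hcomm k hk _ (sub_mem hz.2.2 hbi)).1 ?_
      rw [map_sub, hbk k hk, sub_self]

theorem exists_isHodgeOn_of_nondegenerate (hE : X.IsGradedSubspace E)
    (hdE : ∀ x ∈ E, X.d x ∈ E) (hnd : ∀ x ∈ E, (∀ y ∈ E, X.pair x y = 0) → x = 0)
    [∀ i, FiniteDimensional ℝ ↥(E ⊓ X.grading i)] : ∃ H C, X.IsHodgeOn E H C := by
  obtain ⟨C, hC, hCC⟩ := exists_isotropic_isCocycleCompl hE hdE hnd
  choose H hHZ hHB hHsup hCH using fun i =>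
    exists_harmonic hE hdE hnd (add_sub_cancel i X.n) (hC _)
  have hHg : ∀ i, H i ≤ X.grading i := fun i => (hHZ i).trans (inf_le_right.trans inf_le_right)
  have hCE : ∀ i, C i ≤ E := fun i => (hC i).1.trans inf_le_left
  have hCg : ∀ i, C i ≤ X.grading i := fun i => (hC i).1.trans inf_le_right
  have hBZ : Submodule.map X.d E ≤ LinearMap.ker X.d ⊓ E := by
    rintro _ ⟨e, he, rfl⟩
    exact ⟨X.d_sq e, hdE e he⟩
  refine ⟨⨆ i, H i, ⨆ i, C i, iSup_le fun i => (hHZ i).trans (inf_le_right.trans inf_le_left),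
    iSup_le hCE, isGradedSubspace_iSup hHg, isGradedSubspace_iSup hCg,
    iSup_le fun i => (hHZ i).trans inf_le_left,
    disjoint_iff.1 (disjoint_iSup_of_forall hHg (hE.map isDegree_d) hHB), ?_,
    disjoint_iff.1 (disjoint_iSup_of_forall hCg (isGradedSubspace_ker isDegree_d)
      fun i => (hC i).2.1), ?_,
    fun c hc c' hc' => pair_eq_zero_of_mem_iSup hCg hCg hCC hc hc',
    fun c hc h hh => pair_eq_zero_of_mem_iSup hCg hHg (fun i j hij c hc h hh => ?_) hc hh⟩
  · refine iSup_sup_eq_of_forall (fun i => (hHZ i).trans (inf_le_inf_left _ inf_le_left)) hBZ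
      ((isGradedSubspace_ker isDegree_d).inf hE) fun i => ?_
    rw [inf_assoc]
    exact hHsup i
  · exact iSup_sup_eq_of_forall hCE inf_le_right hE fun i =>
      (le_inf (hC i).2.2 inf_le_left).trans (sup_inf_assoc_of_le _ (hCE i)).le
  · obtain rfl : i = X.n - j := by omega
    exact hCH j c hc h hh

end Nondegenerate

section DegenerateComplement

variable {E : Submodule ℝ A}

lemma finiteDimensional_inf_grading {D : Submodule ℝ A} {i : ℤ}
    (hfin : FiniteDimensional ℝ (↥(X.grading i) ⧸ D.comap (X.grading i).subtype))
    (hED : Disjoint E D) : FiniteDimensional ℝ ↥(E ⊓ X.grading i) := by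
  refine FiniteDimensional.of_injective ((D.comap (X.grading i).subtype).mkQ ∘ₗ
    Submodule.inclusion inf_le_right) ((injective_iff_map_eq_zero _).2 fun x hx => ?_)
  rw [LinearMap.comp_apply, Submodule.mkQ_apply, Submodule.Quotient.mk_eq_zero] at hx
  exact Subtype.ext (Submodule.disjoint_def.1 hED _ x.2.1 hx)

lemma nondegenerate_of_isCompl_degSub (hED : IsCompl E X.degSub) :
    ∀ x ∈ E, (∀ y ∈ E, X.pair x y = 0) → x = 0 := by
  refine fun x hx h => Submodule.disjoint_def.1 hED.disjoint x hx fun y _ => ?_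
  obtain ⟨e, he, u, hu, rfl⟩ :=
    Submodule.mem_sup.1 (hED.sup_eq_top ▸ Submodule.mem_top : y ∈ E ⊔ X.degSub)
  rw [map_add, h e he, pair_degSub_right hu, add_zero]

end DegenerateComplement

end PairedComplex

section Statements

variable {A B : Type*} [AddCommGroup A] [Module ℝ A] [AddCommGroup B] [Module ℝ B]
/-- if `A_deg` is acyclic and the nondegenerate quotient is of finite
type, then `A` is of Hodge type. -/
theorem stmt10 (X : PairedComplex A)
    (hacyclic : ∀ x ∈ X.degSub, X.d x = 0 → ∃ z ∈ X.degSub, x = X.d z)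
    (hfin : ∀ i : ℤ, FiniteDimensional ℝ
      (↥(X.grading i) ⧸ (X.degSub.comap (X.grading i).subtype))) :
    X.IsHodgeType := by
  open PairedComplex in
  obtain ⟨E, hE, hdE, hED⟩ :=
    exists_isCompl_subcomplex isGradedSubspace_degSub (fun _ => d_mem_degSub) hacyclic
  have := fun i => finiteDimensional_inf_grading (hfin i) hED.disjoint
  obtain ⟨H, C, hHC⟩ :=
    exists_isHodgeOn_of_nondegenerate hE hdE (nondegenerate_of_isCompl_degSub hED)
  obtain ⟨C', hC'⟩ := exists_isHodgeOn_bot_of_acyclic isGradedSubspace_degSub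
    (fun _ => d_mem_degSub) hacyclic fun x hx y _ => pair_degSub_left hx y
  have hsum := hHC.sup hdE (fun _ => d_mem_degSub) hED.disjoint
    (fun e _ u hu => ⟨pair_degSub_right hu e, pair_degSub_left hu e⟩) hC'
  rw [hED.sup_eq_top] at hsum
  exact ⟨_, _, hsum⟩

end Statements
end
end

section
/- Let (A,d,⟨·,·⟩) be a cochain complex with pairing, Q := Q(A) its nondegenerate quotient with quotient map π_Q : A → Q. Then each Hodge decomposition A = H ⊕ im d ⊕ C induces a Hodge decomposition Q = π_Q(H) ⊕ im d_Q ⊕ π_Q(C) of Q, and π_Q respects these Hodge decompositions (π_Q(H) ⊆ π_Q(H) and π_Q(C) ⊆ π_Q(C), i.e. π_Q maps the harmonic part to the harmonic part and the complement to the complement). -/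
/-!
The pairing is graded symmetric, so its left and right radicals agree, and boundaries pair
trivially with cocycles. Given `A = H ⊕ im d ⊕ C`, an element is degenerate once it pairs
trivially with `C`, `H` and `im d`. Hence an element of `C` whose differential is degenerate
is itself degenerate, and so is an element of `H` that differs from a boundary by a degenerate
element. These two facts give `π_Q(C) ∩ ker d_Q = 0`, `π_Q(H) ∩ im d_Q = 0` and
`ker d_Q ⊆ π_Q(H) + im d_Q`; the remaining conditions pass to the quotient because `π_Q` is a
surjective chain map preserving pairings.
-/

noncomputable section

namespace PairedComplex

variable {A : Type*} [AddCommGroup A] [Module ℝ A] {X : PairedComplex A}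

theorem isGradedSubspace_top_s11 (X : PairedComplex A) : X.IsGradedSubspace ⊤ := by
  intro x _
  simp only [top_inf_eq, X.internal.submodule_iSup_eq_top, Submodule.mem_top]

theorem IsGradedSubspace.eq_zero_of_homogeneous {M : Type*} [AddCommGroup M] [Module ℝ M]
    {S : Submodule ℝ A} (hS : X.IsGradedSubspace S) (f : A →ₗ[ℝ] M)
    (hf : ∀ i, ∀ s ∈ S, s ∈ X.grading i → f s = 0) {s : A} (hs : s ∈ S) : f s = 0 :=
  (iSup_le fun i x hx => LinearMap.mem_ker.2 (hf i x hx.1 hx.2) :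
    ⨆ i, S ⊓ X.grading i ≤ LinearMap.ker f) (hS s hs)

theorem pair_comm_of_mem_grading {i : ℤ} {y : A} (hy : y ∈ X.grading i) (x : A) :
    X.pair y x = (-1 : ℝ) ^ (i * (X.n - i)) * X.pair x y := by
  have key := X.isGradedSubspace_top_s11.eq_zero_of_homogeneous
    (X.pair y - ((-1 : ℝ) ^ (i * (X.n - i))) • X.pair.flip y) ?_ (Submodule.mem_top (x := x))
  · simpa [sub_eq_zero] using key
  intro j x _ hx
  simp only [LinearMap.sub_apply, LinearMap.smul_apply, LinearMap.flip_apply, smul_eq_mul,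
    sub_eq_zero]
  by_cases hij : i + j = X.n
  · obtain rfl : j = X.n - i := by omega
    exact X.pair_symm i _ y hy x hx
  · rw [X.pair_degree i j hij y hy x hx, X.pair_degree j i (by omega) x hx y hy, mul_zero]

theorem pair_eq_zero_comm_of_mem_grading {i : ℤ} {y : A} (hy : y ∈ X.grading i) (x : A) :
    X.pair y x = 0 ↔ X.pair x y = 0 := by
  rw [pair_comm_of_mem_grading hy, mul_eq_zero, or_iff_right (zpow_ne_zero _ (by norm_num))]

theorem IsGradedSubspace.pair_eq_zero_comm {S : Submodule ℝ A} (hS : X.IsGradedSubspace S)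
    (t : A) : (∀ s ∈ S, X.pair s t = 0) ↔ ∀ s ∈ S, X.pair t s = 0 := by
  constructor
  · intro h s hs
    exact hS.eq_zero_of_homogeneous (X.pair t) (fun i s hsS hsi =>
      (pair_eq_zero_comm_of_mem_grading hsi t).1 (h s hsS)) hs
  · intro h s hs
    exact hS.eq_zero_of_homogeneous (X.pair.flip t) (fun i s hsS hsi =>
      (pair_eq_zero_comm_of_mem_grading hsi t).2 (h s hsS)) hs

theorem mem_degSub_iff {x : A} : x ∈ X.degSub ↔ ∀ y, X.pair x y = 0 :=
  ⟨fun h y => h y trivial, fun h y _ => h y⟩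

theorem mem_degSub_iff_pair_right {x : A} : x ∈ X.degSub ↔ ∀ y, X.pair y x = 0 := by
  rw [mem_degSub_iff]
  simpa using (X.isGradedSubspace_top_s11.pair_eq_zero_comm x).symm

theorem pair_d_eq_zero_of_d_eq_zero_s11 (a : A) {y : A} (hy : X.d y = 0) :
    X.pair (X.d a) y = 0 :=
  X.isGradedSubspace_top_s11.eq_zero_of_homogeneous (X.pair.flip y ∘ₗ X.d)
    (fun i a _ ha => by simp [X.pair_d i a ha, hy]) (Submodule.mem_top (x := a))

theorem pair_d_eq_zero_of_d_mem_degSub {u : A} (hu : X.d u ∈ X.degSub) (v : A) :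
    X.pair u (X.d v) = 0 :=
  X.isGradedSubspace_top_s11.eq_zero_of_homogeneous (X.pair u ∘ₗ X.d) (fun i v _ hv => by
    rw [LinearMap.comp_apply, ← pair_eq_zero_comm_of_mem_grading (X.d_degree i v hv),
      X.pair_d i v hv, mem_degSub_iff_pair_right.1 hu, mul_zero])
    (Submodule.mem_top (x := v))

theorem isGradedSubspace_map {B : Type*} [AddCommGroup B] [Module ℝ B] {Y : PairedComplex B}
    {q : A →ₗ[ℝ] B} (hq : ∀ {i x}, x ∈ X.grading i → q x ∈ Y.grading i) {S : Submodule ℝ A}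
    (hS : X.IsGradedSubspace S) : Y.IsGradedSubspace (S.map q) := by
  rintro _ ⟨s, hs, rfl⟩
  have hle : (⨆ i, S ⊓ X.grading i).map q ≤ ⨆ i, S.map q ⊓ Y.grading i := by
    rw [Submodule.map_iSup]
    exact iSup_mono fun i => le_inf (Submodule.map_mono inf_le_left)
      (Submodule.map_le_iff_le_comap.2 fun _ hx => hq hx.2)
  exact hle (Submodule.mem_map_of_mem (hS s hs))

end PairedComplex

namespace PairedComplex.IsHodge

variable {A : Type*} [AddCommGroup A] [Module ℝ A] {X : PairedComplex A} {H C : Submodule ℝ A}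
  (hHC : X.IsHodge H C)
include hHC

theorem isGradedSubspace_harmonic : X.IsGradedSubspace H := hHC.2.2.1

theorem isGradedSubspace_complement : X.IsGradedSubspace C := hHC.2.2.2.1

theorem harmonic_le_ker : H ≤ LinearMap.ker X.d := hHC.2.2.2.2.1

theorem pair_complement_complement {c c' : A} (hc : c ∈ C) (hc' : c' ∈ C) :
    X.pair c c' = 0 :=
  hHC.2.2.2.2.2.2.2.2.2.1 c hc c' hc'

theorem pair_complement_harmonic {c h : A} (hc : c ∈ C) (hh : h ∈ H) : X.pair c h = 0 :=
  hHC.2.2.2.2.2.2.2.2.2.2 c hc h hh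

theorem exists_eq_add_add_d (x : A) : ∃ c ∈ C, ∃ h ∈ H, ∃ b, x = c + h + X.d b := by
  obtain ⟨-, -, -, -, -, -, hHsup, -, hCsup, -, -⟩ := hHC
  have hx : x ∈ C ⊔ (LinearMap.ker X.d ⊓ ⊤) := by rw [hCsup]; trivial
  obtain ⟨c, hc, k, hk, rfl⟩ := Submodule.mem_sup.1 hx
  have hk' : k ∈ H ⊔ (⊤ : Submodule ℝ A).map X.d := by rw [hHsup]; exact hk
  obtain ⟨h, hh, _, ⟨b, -, rfl⟩, rfl⟩ := Submodule.mem_sup.1 hk'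
  exact ⟨c, hc, h, hh, b, (add_assoc _ _ _).symm⟩

theorem mem_degSub_of_pair_eq_zero {x : A} (hC : ∀ c ∈ C, X.pair x c = 0)
    (hH : ∀ h ∈ H, X.pair x h = 0) (hd : ∀ b, X.pair x (X.d b) = 0) : x ∈ X.degSub :=
  mem_degSub_iff.2 fun y => by
    obtain ⟨c, hc, h, hh, b, rfl⟩ := hHC.exists_eq_add_add_d y
    simp only [map_add, hC c hc, hH h hh, hd b, add_zero]

theorem mem_degSub_of_d_mem_degSub {c : A} (hc : c ∈ C) (hdc : X.d c ∈ X.degSub) :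
    c ∈ X.degSub :=
  hHC.mem_degSub_of_pair_eq_zero (fun _ hc' => hHC.pair_complement_complement hc hc')
    (fun _ hh => hHC.pair_complement_harmonic hc hh) (pair_d_eq_zero_of_d_mem_degSub hdc)

theorem mem_degSub_of_sub_d_mem_degSub {h a : A} (hh : h ∈ H) (hda : h - X.d a ∈ X.degSub) :
    h ∈ X.degSub := by
  have hclosed : ∀ y, X.d y = 0 → X.pair h y = 0 := fun y hy => by
    rw [← sub_add_cancel h (X.d a), map_add, LinearMap.add_apply, mem_degSub_iff.1 hda,
      pair_d_eq_zero_of_d_eq_zero_s11 a hy, add_zero]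
  exact hHC.mem_degSub_of_pair_eq_zero
    ((hHC.isGradedSubspace_complement.pair_eq_zero_comm h).1
      fun _ hc => hHC.pair_complement_harmonic hc hh)
    (fun _ hh' => hclosed _ (hHC.harmonic_le_ker hh')) (fun b => hclosed _ (X.d_sq b))

end PairedComplex.IsHodge

namespace PairedComplex.IsQuotientMap

variable {A B : Type*} [AddCommGroup A] [Module ℝ A] [AddCommGroup B] [Module ℝ B]
  {X : PairedComplex A} {Y : PairedComplex B} {q : A →ₗ[ℝ] B} (hq : X.IsQuotientMap Y q)
include hq

theorem apply_eq_zero_iff {x : A} : q x = 0 ↔ x ∈ X.degSub := by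
  rw [← LinearMap.mem_ker, hq.2.1]

theorem apply_d (x : A) : q (X.d x) = Y.d (q x) := hq.2.2.1 x

theorem pair_apply (x y : A) : Y.pair (q x) (q y) = X.pair x y := hq.2.2.2.1 x y

theorem mem_grading {i : ℤ} {x : A} (hx : x ∈ X.grading i) : q x ∈ Y.grading i :=
  hq.2.2.2.2.1 i x hx

variable {H C : Submodule ℝ A} (hHC : X.IsHodge H C)
include hHC

theorem map_harmonic_le_ker : H.map q ≤ LinearMap.ker Y.d := by
  rintro _ ⟨h, hh, rfl⟩
  rw [LinearMap.mem_ker, ← hq.apply_d, hHC.harmonic_le_ker hh, map_zero]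

theorem map_harmonic_inf_range_eq_bot : H.map q ⊓ (⊤ : Submodule ℝ B).map Y.d = ⊥ := by
  rw [Submodule.eq_bot_iff]
  rintro _ ⟨⟨h, hh, rfl⟩, y, -, hy⟩
  obtain ⟨a, rfl⟩ := hq.1 y
  have hda : q (h - X.d a) = 0 := by rw [map_sub, hq.apply_d, hy, sub_self]
  exact hq.apply_eq_zero_iff.2
    (hHC.mem_degSub_of_sub_d_mem_degSub hh (hq.apply_eq_zero_iff.1 hda))

theorem map_harmonic_sup_range_eq_ker :
    H.map q ⊔ (⊤ : Submodule ℝ B).map Y.d = LinearMap.ker Y.d ⊓ ⊤ := by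
  refine le_antisymm (sup_le (le_inf (hq.map_harmonic_le_ker hHC) le_top) ?_) ?_
  · rintro _ ⟨b, -, rfl⟩
    exact ⟨Y.d_sq b, trivial⟩
  · rintro y ⟨hy, -⟩
    obtain ⟨a, rfl⟩ := hq.1 y
    obtain ⟨c, hc, h, hh, b, rfl⟩ := hHC.exists_eq_add_add_d a
    have hdc : X.d (c + h + X.d b) = X.d c := by
      rw [map_add, map_add, hHC.harmonic_le_ker hh, X.d_sq, add_zero, add_zero]
    have hqc : q c = 0 := hq.apply_eq_zero_iff.2 (hHC.mem_degSub_of_d_mem_degSub hc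
      (hq.apply_eq_zero_iff.1 (by rw [← hdc, hq.apply_d]; exact hy)))
    rw [map_add, map_add, hqc, zero_add, hq.apply_d]
    exact Submodule.add_mem_sup (Submodule.mem_map_of_mem hh) ⟨q b, trivial, rfl⟩

theorem map_complement_inf_ker_eq_bot : C.map q ⊓ LinearMap.ker Y.d = ⊥ := by
  rw [Submodule.eq_bot_iff]
  rintro _ ⟨⟨c, hc, rfl⟩, hdc⟩
  exact hq.apply_eq_zero_iff.2 (hHC.mem_degSub_of_d_mem_degSub hc
    (hq.apply_eq_zero_iff.1 (by rw [hq.apply_d]; exact hdc)))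

theorem map_complement_sup_ker_eq_top : C.map q ⊔ (LinearMap.ker Y.d ⊓ ⊤) = ⊤ := by
  rw [eq_top_iff]
  rintro y -
  obtain ⟨a, rfl⟩ := hq.1 y
  obtain ⟨c, hc, h, hh, b, rfl⟩ := hHC.exists_eq_add_add_d a
  rw [add_assoc, map_add]
  refine Submodule.add_mem_sup (Submodule.mem_map_of_mem hc) ⟨LinearMap.mem_ker.2 ?_, trivial⟩
  rw [← hq.apply_d, map_add, hHC.harmonic_le_ker hh, X.d_sq, add_zero, map_zero]

theorem isHodge_map : Y.IsHodge (H.map q) (C.map q) := by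
  refine ⟨le_top, le_top, isGradedSubspace_map hq.mem_grading hHC.isGradedSubspace_harmonic,
    isGradedSubspace_map hq.mem_grading hHC.isGradedSubspace_complement,
    hq.map_harmonic_le_ker hHC, hq.map_harmonic_inf_range_eq_bot hHC,
    hq.map_harmonic_sup_range_eq_ker hHC, hq.map_complement_inf_ker_eq_bot hHC,
    hq.map_complement_sup_ker_eq_top hHC, ?_, ?_⟩
  · rintro _ ⟨c, hc, rfl⟩ _ ⟨c', hc', rfl⟩
    rw [hq.pair_apply]
    exact hHC.pair_complement_complement hc hc'
  · rintro _ ⟨c, hc, rfl⟩ _ ⟨h, hh, rfl⟩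
    rw [hq.pair_apply]
    exact hHC.pair_complement_harmonic hc hh

end PairedComplex.IsQuotientMap

section Statements

variable {A B : Type*} [AddCommGroup A] [Module ℝ A] [AddCommGroup B] [Module ℝ B]
/-- every Hodge decomposition of `A` induces a Hodge decomposition of
the nondegenerate quotient, respected by the quotient map. -/
theorem stmt11 (X : PairedComplex A) (Y : PairedComplex B) (q : A →ₗ[ℝ] B)
    (hq : X.IsQuotientMap Y q) (H C : Submodule ℝ A) (hHC : X.IsHodge H C) :
    Y.IsHodge (Submodule.map q H) (Submodule.map q C) ∧
    (∀ h ∈ H, q h ∈ Submodule.map q H) ∧ (∀ c ∈ C, q c ∈ Submodule.map q C) := by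
  exact ⟨hq.isHodge_map hHC, fun _ hh => Submodule.mem_map_of_mem hh,
    fun _ hc => Submodule.mem_map_of_mem hc⟩

end Statements
end
end

section
/- Let (A,d,⟨·,·⟩) be a cyclic cochain complex. If x ∈ A satisfies ⟨x,z⟩ = 0 for every z ∈ ker d, then x ∈ im d. In particular, the restriction of the pairing to any harmonic subspace H ⊆ A is nondegenerate. -/
noncomputable section

section Statements

variable {A B : Type*} [AddCommGroup A] [Module ℝ A] [AddCommGroup B] [Module ℝ B]
private lemma my_decomp (X : PairedComplex A) (x : A) :
    ∃ f : ℤ →₀ A, (∀ i, f i ∈ X.grading i) ∧ (f.sum fun _ xi => xi) = x := by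
  have h : x ∈ ⨆ i, X.grading i := by
    rw [X.internal.submodule_iSup_eq_top]; trivial
  exact (Submodule.mem_iSup_iff_exists_finsupp _ x).mp h

private lemma my_pair_zero (X : PairedComplex A) (v : A)
    (h : ∀ j : ℤ, ∀ z ∈ X.grading j, X.pair v z = 0) : ∀ z : A, X.pair v z = 0 := by
  intro z
  obtain ⟨f, hf, rfl⟩ := my_decomp X z
  rw [Finsupp.sum, map_sum]
  exact Finset.sum_eq_zero fun j _ => h j (f j) (hf j)

private lemma my_sign_sq (i : ℤ) : ((-1:ℝ)^i) * ((-1:ℝ)^i) = 1 := by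
  rw [← zpow_add₀ (by norm_num : (-1:ℝ) ≠ 0)]
  have e : i + i = 2 * i := by ring
  rw [e, zpow_mul]
  norm_num

private lemma my_homog (X : PairedComplex A) (hperf : X.Perfect) (i : ℤ) (u : A)
    (hu : u ∈ X.grading i)
    (horth : ∀ z ∈ X.grading (X.n - i), X.d z = 0 → X.pair u z = 0) :
    ∃ y : A, X.d y = u := by
  classical
  set V := X.grading (X.n - i) with hV
  set f : ↥V →ₗ[ℝ] A := X.d ∘ₗ V.subtype with hfdef
  set φ : ↥V →ₗ[ℝ] ℝ := ((-1:ℝ)^i) • ((X.pair u) ∘ₗ V.subtype) with hφdef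
  have hker : LinearMap.ker f ≤ LinearMap.ker φ := by
    intro z hz
    have hz' : X.d (z : A) = 0 := hz
    have h0 := horth (z : A) z.2 hz'
    simp [hφdef, LinearMap.mem_ker, h0]
  obtain ⟨C, hC⟩ := Submodule.exists_isCompl (LinearMap.range f)
  set Ψ : A →ₗ[ℝ] ℝ :=
    ((LinearMap.ker f).liftQ φ hker) ∘ₗ
      (f.quotKerEquivRange.symm.toLinearMap) ∘ₗ
      (LinearMap.range f).linearProjOfIsCompl C hC with hΨdef
  have hΨ : ∀ z : ↥V, Ψ (X.d (z : A)) = ((-1:ℝ)^i) * X.pair u (z : A) := by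
    intro z
    have h1 : X.d (z : A) = f z := rfl
    have h2 : (LinearMap.range f).linearProjOfIsCompl C hC (f z)
        = ⟨f z, LinearMap.mem_range_self f z⟩ :=
      Submodule.linearProjOfIsCompl_apply_left hC ⟨f z, LinearMap.mem_range_self f z⟩
    rw [h1, hΨdef]
    simp only [LinearMap.comp_apply, h2, LinearEquiv.coe_coe,
      LinearMap.quotKerEquivRange_symm_apply_image]
    rw [show (LinearMap.ker f).mkQ z = Submodule.Quotient.mk z from rfl,
      Submodule.liftQ_apply]
    simp [hφdef]
  obtain ⟨y, hy, hyrep⟩ := hperf.2 (i - 1) (Ψ ∘ₗ (X.grading (X.n - (i - 1))).subtype)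
  have hiy : X.d y ∈ X.grading i := by
    have h := X.d_degree (i - 1) y hy
    have e : i - 1 + 1 = i := by ring
    rwa [e] at h
  have key : ∀ j : ℤ, ∀ z ∈ X.grading j, X.pair (X.d y - u) z = 0 := by
    intro j z hz
    rw [map_sub, LinearMap.sub_apply]
    by_cases hj : i + j = X.n
    · have hzV : z ∈ V := by
        have e : X.n - i = j := by omega
        rw [hV, e]; exact hz
      have hdz : X.d z ∈ X.grading (X.n - (i - 1)) := by
        have h := X.d_degree (X.n - i) z hzV
        have e : X.n - i + 1 = X.n - (i - 1) := by ring
        rwa [e] at h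
      have h3 := X.pair_d (i - 1) y hy z
      have h4 : X.pair y (X.d z) = Ψ (X.d z) := by
        have h := hyrep ⟨X.d z, hdz⟩
        simpa using h
      have h5 : Ψ (X.d z) = ((-1:ℝ)^i) * X.pair u z := hΨ ⟨z, hzV⟩
      have esign : (1:ℤ) + (i - 1) = i := by ring
      rw [h3, esign, h4, h5, ← mul_assoc, my_sign_sq, one_mul, sub_self]
    · rw [X.pair_degree i j hj _ hiy _ hz, X.pair_degree i j hj _ hu _ hz, sub_self]
  have hz0 := my_pair_zero X _ key
  have h0 : X.d y - u = 0 := hperf.1 _ hz0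
  exact ⟨y, sub_eq_zero.mp h0⟩

/-- in a cyclic cochain complex, an element orthogonal to all cocycles
is a coboundary; in particular the pairing restricted to a harmonic subspace is
nondegenerate. -/
theorem stmt14 (X : PairedComplex A) (hperf : X.Perfect) :
    (∀ x : A, (∀ z : A, X.d z = 0 → X.pair x z = 0) → ∃ y : A, x = X.d y) ∧
    ∀ H : Submodule ℝ A, X.IsHarmonic H →
      ∀ x ∈ H, (∀ y ∈ H, X.pair x y = 0) → x = 0 := by
  classical
  have part1 : ∀ x : A, (∀ z : A, X.d z = 0 → X.pair x z = 0) → ∃ y : A, x = X.d y := by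
    intro x hx
    obtain ⟨f, hf, hsum⟩ := my_decomp X x
    have hcomp : ∀ k : ℤ, ∀ z ∈ X.grading (X.n - k), X.d z = 0 → X.pair (f k) z = 0 := by
      intro k z hz hdz
      have hxz : X.pair x z = 0 := hx z hdz
      rw [← hsum, Finsupp.sum, map_sum, LinearMap.coe_sum, Finset.sum_apply] at hxz
      have hterm : ∀ k' ∈ f.support, k' ≠ k → X.pair (f k') z = 0 := fun k' _ hne =>
        X.pair_degree k' (X.n - k) (by omega) _ (hf k') _ hz
      by_cases hk : k ∈ f.support
      · rw [Finset.sum_eq_single_of_mem k hk hterm] at hxz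
        exact hxz
      · rw [Finsupp.notMem_support_iff.mp hk]
        simp
    have hex : ∀ k : ℤ, ∃ y, X.d y = f k := fun k =>
      my_homog X hperf k (f k) (hf k) (hcomp k)
    choose Y hY using hex
    refine ⟨∑ k ∈ f.support, Y k, ?_⟩
    rw [map_sum, ← hsum, Finsupp.sum]
    exact Finset.sum_congr rfl fun k _ => (hY k).symm
  refine ⟨part1, ?_⟩
  intro H hH x hxH horthH
  obtain ⟨hgr, hle, hinf, hsup⟩ := hH
  obtain ⟨g, hg, hgsum⟩ := (Submodule.mem_iSup_iff_exists_finsupp _ x).mp (hgr x hxH)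
  have hxker : ∀ z : A, X.d z = 0 → X.pair x z = 0 := by
    intro z hz
    have hzmem : z ∈ H ⊔ LinearMap.range X.d := by
      rw [hsup]; exact LinearMap.mem_ker.mpr hz
    obtain ⟨h1, hh1, w, hw, rfl⟩ := Submodule.mem_sup.mp hzmem
    obtain ⟨u, rfl⟩ := hw
    rw [map_add]
    have e1 : X.pair x h1 = 0 := horthH h1 hh1
    have e2 : X.pair x (X.d u) = 0 := by
      rw [← hgsum, Finsupp.sum, map_sum, LinearMap.coe_sum, Finset.sum_apply]
      refine Finset.sum_eq_zero fun k _ => ?_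
      have hk1 : g k ∈ H := (hg k).1
      have hk2 : g k ∈ X.grading k := (hg k).2
      have hdk : X.d (g k) = 0 := hle hk1
      have h := X.pair_d k (g k) hk2 u
      rw [hdk, map_zero, LinearMap.zero_apply] at h
      have hne : ((-1:ℝ) ^ (1 + k)) ≠ 0 := by
        intro hc
        have := zpow_ne_zero (1 + k) (by norm_num : (-1:ℝ) ≠ 0)
        exact this hc
      rcases mul_eq_zero.mp h.symm with hc | hc
      · exact absurd hc hne
      · exact hc
    rw [e1, e2, add_zero]
  obtain ⟨y, hy⟩ := part1 x hxker
  have hmem : x ∈ H ⊓ LinearMap.range X.d := ⟨hxH, ⟨y, hy.symm⟩⟩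
  rw [hinf] at hmem
  exact hmem


end Statements
end
end

section
/- Let (A,d,∧,⟨·,·⟩) be a DGA with pairing which is of Hodge type, let P : A → A be a special propagator with harmonic subspace H_P := im(id + d∘P + P∘d), and let S_P be the small subalgebra associated to P. Then S_P equals the smallest graded subspace of A that contains H_P and is closed under the product ∧ and under P; equivalently, S_P is spanned by the elements obtained from tuples of homogeneous elements of H_P by iterated applications of P and ∧ (closure under d is automatic). -/
noncomputable section

namespace PairedComplex

variable {A : Type*} [AddCommGroup A] [Module ℝ A] (X : PairedComplex A) {P : A →ₗ[ℝ] A}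

theorem assocProj_apply (P : A →ₗ[ℝ] A) (x : A) :
    X.assocProj P x = x + X.d (P x) + P (X.d x) := by
  simp [assocProj]

theorem d_assocProj (P : A →ₗ[ℝ] A) (x : A) :
    X.d (X.assocProj P x) = X.assocProj P (X.d x) := by
  simp [assocProj_apply, X.d_sq]

theorem isDegree_assocProj (hP : X.IsDegree P (-1)) : X.IsDegree (X.assocProj P) 0 := by
  intro i x hx
  have hdP : X.d (P x) ∈ X.grading i := by
    simpa using X.d_degree _ _ (hP i x hx)
  have hPd : P (X.d x) ∈ X.grading i := by
    simpa using hP _ _ (X.d_degree i x hx)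
  rw [add_zero, assocProj_apply]
  exact add_mem (add_mem hx hdP) hPd

theorem range_le_of_forall_grading {f : A →ₗ[ℝ] A} {S : Submodule ℝ A}
    (h : ∀ i, ∀ x ∈ X.grading i, f x ∈ S) : LinearMap.range f ≤ S := by
  rintro _ ⟨a, rfl⟩
  have ha : a ∈ ⨆ i, X.grading i := by
    rw [X.internal.submodule_iSup_eq_top]
    exact Submodule.mem_top
  refine Submodule.iSup_induction _ (motive := fun z => f z ∈ S) ha h ?_ ?_
  · simp
  · intro x y hx hy
    simpa using add_mem hx hy

theorem isGradedSubspace_span {s : Set A} (h : ∀ x ∈ s, ∃ i, x ∈ X.grading i) :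
    X.IsGradedSubspace (Submodule.span ℝ s) := by
  intro x hx
  refine Submodule.span_le.2 (fun z hz => ?_) hx
  obtain ⟨i, hi⟩ := h z hz
  exact Submodule.mem_iSup_of_mem i ⟨Submodule.subset_span hz, hi⟩

end PairedComplex

namespace PairedDGA

variable {A : Type*} [AddCommGroup A] [Module ℝ A] (Y : PairedDGA A) {P : A →ₗ[ℝ] A}

def treeSpan (P : A →ₗ[ℝ] A) : Submodule ℝ A :=
  Submodule.span ℝ {x : A | TreeGen Y P x}

theorem TreeGen.exists_mem_grading (hP : Y.IsDegree P (-1)) {x : A} (hx : TreeGen Y P x) :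
    ∃ i, x ∈ Y.grading i := by
  induction hx with
  | base i x hxi _ => exact ⟨i, hxi⟩
  | mul x y _ _ ihx ihy =>
    obtain ⟨i, hi⟩ := ihx
    obtain ⟨j, hj⟩ := ihy
    exact ⟨i + j, Y.mul_degree i j x hi y hj⟩
  | app x _ ih =>
    obtain ⟨i, hi⟩ := ih
    exact ⟨i + -1, hP i x hi⟩

theorem subset_treeSpan {x : A} (hx : TreeGen Y P x) : x ∈ Y.treeSpan P :=
  Submodule.subset_span hx

theorem mul_mem_treeSpan {x y : A} (hx : x ∈ Y.treeSpan P) (hy : y ∈ Y.treeSpan P) :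
    Y.mul x y ∈ Y.treeSpan P := by
  have hclosed : Submodule.map₂ Y.mul (Y.treeSpan P) (Y.treeSpan P) ≤ Y.treeSpan P := by
    rw [treeSpan, Submodule.map₂_span_span, Submodule.span_le]
    rintro _ ⟨a, ha, b, hb, rfl⟩
    exact Y.subset_treeSpan (.mul a b ha hb)
  exact hclosed (Submodule.apply_mem_map₂ Y.mul hx hy)

theorem apply_mem_treeSpan {x : A} (hx : x ∈ Y.treeSpan P) : P x ∈ Y.treeSpan P := by
  have hclosed : Submodule.map P (Y.treeSpan P) ≤ Y.treeSpan P :=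
    (Submodule.map_span_le P _ _).2 fun a ha => Y.subset_treeSpan (.app a ha)
  exact hclosed (Submodule.mem_map_of_mem hx)

theorem range_assocProj_le_treeSpan (hP : Y.IsDegree P (-1)) :
    LinearMap.range (Y.assocProj P) ≤ Y.treeSpan P :=
  Y.range_le_of_forall_grading fun i x hx =>
    Y.subset_treeSpan (.base i _ (by simpa using Y.isDegree_assocProj hP i x hx) ⟨x, rfl⟩)

theorem isGradedSubspace_treeSpan (hP : Y.IsDegree P (-1)) :
    Y.IsGradedSubspace (Y.treeSpan P) :=
  Y.isGradedSubspace_span fun _ hx => TreeGen.exists_mem_grading Y hP hx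

/-- On generators: `d ∘ π = π ∘ d` handles harmonic leaves, the Leibniz rule handles
products, and `d P = π - id - P d` handles applications of `P`. -/
theorem d_mem_treeSpan_of_treeGen (hP : Y.IsDegree P (-1)) {x : A} (hx : TreeGen Y P x) :
    Y.d x ∈ Y.treeSpan P := by
  induction hx with
  | base i x hxi hxr =>
    obtain ⟨a, rfl⟩ := hxr
    refine Y.subset_treeSpan (.base (i + 1) _ (Y.d_degree i _ hxi) ⟨Y.d a, ?_⟩)
    exact (Y.d_assocProj P a).symm
  | mul x y hx hy ihx ihy =>
    obtain ⟨i, hi⟩ := TreeGen.exists_mem_grading Y hP hx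
    rw [Y.leibniz i x hi y]
    exact add_mem (Y.mul_mem_treeSpan ihx (Y.subset_treeSpan hy))
      (Submodule.smul_mem _ _ (Y.mul_mem_treeSpan (Y.subset_treeSpan hx) ihy))
  | app x hx ih =>
    have hdP : Y.d (P x) = Y.assocProj P x - x - P (Y.d x) := by
      rw [Y.assocProj_apply]
      abel
    rw [hdP]
    exact sub_mem (sub_mem (Y.range_assocProj_le_treeSpan hP ⟨x, rfl⟩)
      (Y.subset_treeSpan hx)) (Y.apply_mem_treeSpan ih)

theorem d_mem_treeSpan (hP : Y.IsDegree P (-1)) {x : A} (hx : x ∈ Y.treeSpan P) :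
    Y.d x ∈ Y.treeSpan P := by
  have hclosed : Submodule.map Y.d (Y.treeSpan P) ≤ Y.treeSpan P :=
    (Submodule.map_span_le Y.d _ _).2 fun _ ha => Y.d_mem_treeSpan_of_treeGen hP ha
  exact hclosed (Submodule.mem_map_of_mem hx)

theorem treeSpan_le {S : Submodule ℝ A} (hπ : LinearMap.range (Y.assocProj P) ≤ S)
    (hmul : ∀ x ∈ S, ∀ y ∈ S, Y.mul x y ∈ S) (hP : ∀ x ∈ S, P x ∈ S) :
    Y.treeSpan P ≤ S := by
  refine Submodule.span_le.2 fun x hx => ?_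
  induction hx with
  | base _ _ _ hxr => exact hπ hxr
  | mul x y _ _ ihx ihy => exact hmul x ihx y ihy
  | app x _ ih => exact hP x ih

theorem smallSub_le_treeSpan (hP : Y.IsDegree P (-1)) : Y.smallSub P ≤ Y.treeSpan P :=
  sInf_le ⟨Y.range_assocProj_le_treeSpan hP, Y.isGradedSubspace_treeSpan hP,
    fun _ => Y.d_mem_treeSpan hP, fun _ hx _ hy => Y.mul_mem_treeSpan hx hy,
    fun _ => Y.apply_mem_treeSpan⟩

end PairedDGA

section Statements

variable {A B : Type*} [AddCommGroup A] [Module ℝ A] [AddCommGroup B] [Module ℝ B]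
theorem stmt16_general (Y : PairedDGA A)
    (P : A →ₗ[ℝ] A)
    (hP : Y.toPairedComplex.IsPropagator P ∧ Y.toPairedComplex.IsSpecial P) :
    Y.smallSub P =
      sInf {S : Submodule ℝ A |
        LinearMap.range (Y.toPairedComplex.assocProj P) ≤ S ∧
        Y.toPairedComplex.IsGradedSubspace S ∧
        (∀ x ∈ S, ∀ y ∈ S, Y.mul x y ∈ S) ∧
        (∀ x ∈ S, P x ∈ S)} ∧
    Y.smallSub P = Submodule.span ℝ {x : A | TreeGen Y P x} := by
  have hPdeg : Y.IsDegree P (-1) := hP.1.1.1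
  have hsmall_le : Y.smallSub P ≤ Y.treeSpan P := Y.smallSub_le_treeSpan hPdeg
  have htree_le : Y.treeSpan P ≤ sInf {S : Submodule ℝ A |
      LinearMap.range (Y.toPairedComplex.assocProj P) ≤ S ∧
      Y.toPairedComplex.IsGradedSubspace S ∧
      (∀ x ∈ S, ∀ y ∈ S, Y.mul x y ∈ S) ∧
      (∀ x ∈ S, P x ∈ S)} :=
    le_sInf fun _ ⟨hπ, _, hmul, hPS⟩ => Y.treeSpan_le hπ hmul hPS
  have hle_small : sInf {S : Submodule ℝ A |
      LinearMap.range (Y.toPairedComplex.assocProj P) ≤ S ∧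
      Y.toPairedComplex.IsGradedSubspace S ∧
      (∀ x ∈ S, ∀ y ∈ S, Y.mul x y ∈ S) ∧
      (∀ x ∈ S, P x ∈ S)} ≤ Y.smallSub P :=
    sInf_le_sInf fun _ ⟨hπ, hgr, _, hmul, hPS⟩ => ⟨hπ, hgr, hmul, hPS⟩
  exact ⟨le_antisymm (hsmall_le.trans htree_le) hle_small,
    le_antisymm hsmall_le (htree_le.trans hle_small)⟩

/-- the small subalgebra is the smallest graded subspace containing
`H_P` closed under the product and `P` (closure under `d` is automatic), and it is
spanned by the iterated tree evaluations. -/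
theorem stmt16 (Y : PairedDGA A)
    (hHodge : Y.toPairedComplex.IsHodgeType)
    (P : A →ₗ[ℝ] A)
    (hP : Y.toPairedComplex.IsPropagator P ∧ Y.toPairedComplex.IsSpecial P) :
    Y.smallSub P =
      sInf {S : Submodule ℝ A |
        LinearMap.range (Y.toPairedComplex.assocProj P) ≤ S ∧
        Y.toPairedComplex.IsGradedSubspace S ∧
        (∀ x ∈ S, ∀ y ∈ S, Y.mul x y ∈ S) ∧
        (∀ x ∈ S, P x ∈ S)} ∧
    Y.smallSub P = Submodule.span ℝ {x : A | TreeGen Y P x} :=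
  stmt16_general Y P hP

end Statements
end
end
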